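/- arXiv:2009.13847 — 10 statements merged into one kernel-verified Lean document; each statement's English description precedes it below -/
import Mathlib

section
/- Let R be an associative k-algebra with a linear operator d satisfying d(xy) = d(x)y + x d(y) + λ d(x)d(y) for all x,y in R (a differential operator of weight λ). Then for all x, y in R and all natural numbers n, the n-th iterate satisfies d^n(xy) = ∑_{j=0}^{n} ∑_{k=0}^{n-j} C(n,j) C(n-j,k) λ^j d^{n-k}(x) d^{j+k}(y). -/
open Finset

private lemma coeff_rec (n j l : ℕ) :
    (n+1).choose j * ((n+1)-j).choose l =
      n.choose j * (n-j).choose l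
      + (if l = 0 then 0 else n.choose j * (n-j).choose (l-1))
      + (if j = 0 then 0 else n.choose (j-1) * (n-(j-1)).choose l) := by
  cases j with
  | zero =>
    cases l with
    | zero => simp
    | succ l => simp [Nat.choose_succ_succ, Nat.add_comm]
  | succ j =>
    simp only [Nat.succ_sub_succ, Nat.add_sub_cancel, if_neg (Nat.succ_ne_zero j)]
    cases l with
    | zero =>
      simp [Nat.choose_succ_succ, Nat.succ_eq_add_one]
      ring
    | succ l =>
      simp only [Nat.succ_sub_succ, Nat.sub_zero, if_neg (Nat.succ_ne_zero l),
        Nat.add_sub_cancel]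
      have key : n.choose (j+1) * (n-j).choose (l+1)
          = n.choose (j+1) * (n-(j+1)).choose l
            + n.choose (j+1) * (n-(j+1)).choose (l+1) := by
        rcases le_or_gt (j+1) n with h | h
        · have h1 : n - j = (n - (j+1)) + 1 := by omega
          rw [h1, Nat.choose_succ_succ, Nat.mul_add]
        · simp [Nat.choose_eq_zero_of_lt h]
      rw [Nat.choose_succ_succ, add_mul, key]
      ring

private lemma pascal_double_sum {M : Type*} [AddCommMonoid M] (n : ℕ) (g : ℕ → ℕ → M) :
    ∑ j ∈ range (n+2), ∑ l ∈ range (n+2), ((n+1).choose j * ((n+1)-j).choose l) • g j l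
    = (∑ j ∈ range (n+1), ∑ l ∈ range (n+1), (n.choose j * (n-j).choose l) • g j l)
    + (∑ j ∈ range (n+1), ∑ l ∈ range (n+1), (n.choose j * (n-j).choose l) • g j (l+1))
    + (∑ j ∈ range (n+1), ∑ l ∈ range (n+1), (n.choose j * (n-j).choose l) • g (j+1) l) := by
  have hsplit : ∑ j ∈ range (n+2), ∑ l ∈ range (n+2),
      ((n+1).choose j * ((n+1)-j).choose l) • g j l
      = (∑ j ∈ range (n+2), ∑ l ∈ range (n+2), (n.choose j * (n-j).choose l) • g j l)
      + (∑ j ∈ range (n+2), ∑ l ∈ range (n+2),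
          (if l = 0 then 0 else n.choose j * (n-j).choose (l-1)) • g j l)
      + (∑ j ∈ range (n+2), ∑ l ∈ range (n+2),
          (if j = 0 then 0 else n.choose (j-1) * (n-(j-1)).choose l) • g j l) := by
    rw [← Finset.sum_add_distrib, ← Finset.sum_add_distrib]
    refine Finset.sum_congr rfl fun j _ => ?_
    rw [← Finset.sum_add_distrib, ← Finset.sum_add_distrib]
    refine Finset.sum_congr rfl fun l _ => ?_
    rw [coeff_rec, add_smul, add_smul]
  rw [hsplit]
  congr 1
  · congr 1
    -- first sum: shrink range
    · rw [Finset.sum_range_succ]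
      have h0 : ∑ l ∈ range (n+2), (n.choose (n+1) * (n-(n+1)).choose l) • g (n+1) l = 0 := by
        simp [Nat.choose_eq_zero_of_lt (Nat.lt_succ_self n)]
      rw [h0, add_zero]
      refine Finset.sum_congr rfl fun j hj => ?_
      rw [Finset.sum_range_succ]
      have : (n-j).choose (n+1) = 0 :=
        Nat.choose_eq_zero_of_lt (Nat.lt_succ_of_le (Nat.sub_le n j))
      simp [this]
    -- second sum: shift inner index
    · rw [Finset.sum_range_succ]
      have h0 : ∑ l ∈ range (n+2),
          (if l = 0 then 0 else n.choose (n+1) * (n-(n+1)).choose (l-1)) • g (n+1) l = 0 := by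
        simp [Nat.choose_eq_zero_of_lt (Nat.lt_succ_self n)]
      rw [h0, add_zero]
      refine Finset.sum_congr rfl fun j hj => ?_
      rw [Finset.sum_range_succ' (fun l => (if l = 0 then 0 else n.choose j * (n-j).choose (l-1)) • g j l) (n+1)]
      simp
  -- third sum: shift outer index
  · rw [Finset.sum_range_succ' (fun j => ∑ l ∈ range (n+2), (if j = 0 then 0 else n.choose (j-1) * (n-(j-1)).choose l) • g j l) (n+1)]
    have hz : (∑ l ∈ range (n+2),
        (if (0:ℕ) = 0 then (0:ℕ) else n.choose (0-1) * (n-(0-1)).choose l) • g 0 l) = 0 := by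
      simp
    rw [hz, add_zero]
    refine Finset.sum_congr rfl fun j hj => ?_
    rw [Finset.sum_range_succ]
    have : (n-j).choose (n+1) = 0 :=
      Nat.choose_eq_zero_of_lt (Nat.lt_succ_of_le (Nat.sub_le n j))
    simp [this]

private lemma aux_leibniz (k : Type*) [Field k] (R : Type*) [Ring R] [Algebra k R]
    (lam : k) (d : R →ₗ[k] R)
    (hd : ∀ x y : R, d (x * y) = d x * y + x * d y + lam • (d x * d y)) :
    ∀ (n : ℕ) (x y : R),
      (⇑d)^[n] (x * y) =
        ∑ j ∈ Finset.range (n + 1), ∑ l ∈ Finset.range (n + 1),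
          (n.choose j * (n - j).choose l : ℕ) •
            lam ^ j • ((⇑d)^[n - l] x * (⇑d)^[j + l] y) := by
  intro n
  induction n with
  | zero => intro x y; simp
  | succ n ih =>
    intro x y
    rw [Function.iterate_succ_apply', ih x y, map_sum]
    have step : ∀ j ∈ range (n+1),
        d (∑ l ∈ range (n+1), (n.choose j * (n-j).choose l : ℕ) •
            lam ^ j • ((⇑d)^[n-l] x * (⇑d)^[j+l] y))
        = ∑ l ∈ range (n+1),
            ((n.choose j * (n-j).choose l : ℕ) •
              (lam ^ j • ((⇑d)^[n+1-l] x * (⇑d)^[j+l] y))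
            + (n.choose j * (n-j).choose l : ℕ) •
              (lam ^ j • ((⇑d)^[n+1-(l+1)] x * (⇑d)^[j+(l+1)] y))
            + (n.choose j * (n-j).choose l : ℕ) •
              (lam ^ (j+1) • ((⇑d)^[n+1-l] x * (⇑d)^[(j+1)+l] y))) := by
      intro j hj
      rw [map_sum]
      refine Finset.sum_congr rfl fun l hl => ?_
      rw [map_nsmul, map_smul, hd]
      have hl' : l ≤ n := Nat.lt_succ_iff.mp (Finset.mem_range.mp hl)
      have e1 : n + 1 - l = (n - l) + 1 := by omega
      have e2 : n + 1 - (l+1) = n - l := by omega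
      have e3 : j + (l+1) = (j + l) + 1 := by omega
      have e4 : (j+1) + l = (j + l) + 1 := by omega
      rw [e1, e2, e3, e4, Function.iterate_succ_apply' d (n-l) x,
        Function.iterate_succ_apply' d (j+l) y]
      rw [smul_add, smul_add, smul_smul, ← pow_succ, smul_add, smul_add]
    rw [Finset.sum_congr rfl step]
    simp only [Finset.sum_add_distrib]
    exact (pascal_double_sum n
      (fun j l => lam ^ j • ((⇑d)^[n+1-l] x * (⇑d)^[j+l] y))).symm

/-- Higher-order Leibniz rule for a differential operator of weight λ. -/
theorem higher_leibniz_weighted (k : Type*) [Field k] (R : Type*) [Ring R] [Algebra k R]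
    (lam : k) (d : R →ₗ[k] R)
    (hd : ∀ x y : R, d (x * y) = d x * y + x * d y + lam • (d x * d y)) :
    ∀ (x y : R) (n : ℕ),
      (⇑d)^[n] (x * y) =
        ∑ j ∈ Finset.range (n + 1), ∑ l ∈ Finset.range (n - j + 1),
          (n.choose j * (n - j).choose l : ℕ) •
            lam ^ j • ((⇑d)^[n - l] x * (⇑d)^[j + l] y) := by
  intro x y n
  rw [aux_leibniz k R lam d hd n x y]
  refine Finset.sum_congr rfl fun j hj => ?_
  have hjn : j ≤ n := Nat.lt_succ_iff.mp (Finset.mem_range.mp hj)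
  refine (Finset.sum_subset (Finset.range_subset_range.2 (by omega)) fun l _ hl => ?_).symm
  have : n - j < l := by
    simp only [Finset.mem_range, not_lt] at hl; omega
  simp [Nat.choose_eq_zero_of_lt this]
end

section
/- Let X be a set and let k⟨Δ(X)⟩ be the free (noncommutative) k-algebra on the set Δ(X) = X × ℕ, writing x^(n) for (x,n). Define d on generators by d(x^(n)) = x^(n+1), set d(1)=0, and extend to products by d(uv) = d(u)v + u d(v) + λ d(u) d(v). Then (k⟨Δ(X)⟩, d) satisfies the universal property of the free differential algebra of weight λ on X: for any differential algebra (R, d_R) of weight λ and any map f : X → R, there is a unique differential algebra homomorphism f̄ : k⟨Δ(X)⟩ → R with f̄(x^(0)) = f(x) for all x ∈ X. -/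
universe u v w

section Aux

variable {k : Type*} [CommRing k] {R : Type*} [Ring R] [Algebra k R]

/-- Given a weight-`lam` differential operator `dR` on `R`, the map
`a ↦ !![a, dR a; 0, a + lam • dR a]` is an algebra homomorphism into 2×2 matrices. -/
noncomputable def diffRep (lam : k) (dR : R →ₗ[k] R)
    (hmul : ∀ x y : R, dR (x * y) = dR x * y + x * dR y + lam • (dR x * dR y))
    (h1 : dR 1 = 0) : R →ₐ[k] Matrix (Fin 2) (Fin 2) R where
  toFun a := !![a, dR a; 0, a + lam • dR a]
  map_one' := by
    show !![(1:R), dR 1; 0, 1 + lam • dR 1] = 1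
    rw [h1]; simp [Matrix.one_fin_two]
  map_mul' a b := by
    show !![a * b, dR (a * b); 0, a * b + lam • dR (a * b)] = _ * _
    rw [Matrix.mul_fin_two, hmul]
    congr 1 <;> simp [mul_add, add_mul, smul_add, smul_mul_assoc, mul_smul_comm,
      smul_smul] <;> ring_nf <;> constructor <;> abel
  map_zero' := by
    show !![(0:R), dR 0; 0, 0 + lam • dR 0] = 0
    simp only [map_zero, smul_zero, add_zero]
    ext i j
    fin_cases i <;> fin_cases j <;> simp
  map_add' a b := by
    show !![a + b, dR (a + b); 0, a + b + lam • dR (a + b)] = _ + _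
    have : !![a + b, dR (a + b); 0, a + b + lam • dR (a + b)] =
        !![a, dR a; 0, a + lam • dR a] + !![b, dR b; 0, b + lam • dR b] := by
      simp [map_add, smul_add]
      abel
    exact this
  commutes' r := by
    have hd : dR (algebraMap k R r) = 0 := by
      rw [Algebra.algebraMap_eq_smul_one, map_smul, h1, smul_zero]
    ext i j
    fin_cases i <;> fin_cases j <;>
      simp [hd, Matrix.algebraMap_matrix_apply]

@[simp] theorem diffRep_apply (lam : k) (dR : R →ₗ[k] R)
    (hmul : ∀ x y : R, dR (x * y) = dR x * y + x * dR y + lam • (dR x * dR y))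
    (h1 : dR 1 = 0) (a : R) :
    diffRep lam dR hmul h1 a = !![a, dR a; 0, a + lam • dR a] := rfl

end Aux

/-- The free algebra on `Δ(X) = X × ℕ`, equipped with the weight-`λ` derivation sending
`x^(n)` to `x^(n+1)`, is the free differential algebra of weight `λ` on the set `X`. -/
theorem free_differential_algebra_on_set (k : Type u) [Field k] [CharZero k] (lam : k)
    (X : Type v) :
    ∃ d : FreeAlgebra k (X × ℕ) →ₗ[k] FreeAlgebra k (X × ℕ),
      (∀ (x : X) (n : ℕ), d (FreeAlgebra.ι k (x, n)) = FreeAlgebra.ι k (x, n + 1)) ∧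
      d 1 = 0 ∧
      (∀ a b : FreeAlgebra k (X × ℕ), d (a * b) = d a * b + a * d b + lam • (d a * d b)) ∧
      (∀ (R : Type w) [Ring R] [Algebra k R] (dR : R →ₗ[k] R),
        (∀ x y : R, dR (x * y) = dR x * y + x * dR y + lam • (dR x * dR y)) →
        dR 1 = 0 →
        ∀ f : X → R,
          ∃! fb : FreeAlgebra k (X × ℕ) →ₐ[k] R,
            (∀ x : X, fb (FreeAlgebra.ι k (x, 0)) = f x) ∧
            (∀ a, fb (d a) = dR (fb a))) := by
  classical
  set A := FreeAlgebra k (X × ℕ) with hA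
  -- the matrix representation hom on the free algebra
  let Φ : A →ₐ[k] Matrix (Fin 2) (Fin 2) A :=
    FreeAlgebra.lift k (fun p : X × ℕ =>
      !![FreeAlgebra.ι k p, FreeAlgebra.ι k (p.1, p.2 + 1);
         0, FreeAlgebra.ι k p + lam • FreeAlgebra.ι k (p.1, p.2 + 1)])
  have Φι : ∀ p : X × ℕ, Φ (FreeAlgebra.ι k p) =
      !![FreeAlgebra.ι k p, FreeAlgebra.ι k (p.1, p.2 + 1);
         0, FreeAlgebra.ι k p + lam • FreeAlgebra.ι k (p.1, p.2 + 1)] := fun p =>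
    FreeAlgebra.lift_ι_apply _ _
  -- the derivation
  let d : A →ₗ[k] A :=
    { toFun := fun a => Φ a 0 1
      map_add' := fun a b => by simp
      map_smul' := fun c a => by simp }
  have hd : ∀ a : A, d a = Φ a 0 1 := fun _ => rfl
  -- structural facts about Φ
  have key : ∀ a : A, Φ a 1 0 = 0 ∧ Φ a 0 0 = a ∧ Φ a 1 1 = a + lam • Φ a 0 1 := by
    intro a
    induction a using FreeAlgebra.induction with
    | grade0 r =>
        rw [AlgHom.commutes]
        simp [Matrix.algebraMap_matrix_apply]
        rfl
    | grade1 p => rw [Φι]; simp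
    | mul a b ha hb =>
        obtain ⟨ha1, ha2, ha3⟩ := ha
        obtain ⟨hb1, hb2, hb3⟩ := hb
        rw [map_mul]
        refine ⟨?_, ?_, ?_⟩ <;>
          simp only [Matrix.mul_apply, Fin.sum_univ_two, ha1, ha2, ha3, hb1, hb2, hb3,
            zero_mul, mul_zero, add_zero, zero_add]
        simp [mul_add, add_mul, smul_add, smul_mul_assoc, mul_smul_comm, smul_smul]
        abel
    | add a b ha hb =>
        obtain ⟨ha1, ha2, ha3⟩ := ha
        obtain ⟨hb1, hb2, hb3⟩ := hb
        rw [map_add]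
        refine ⟨?_, ?_, ?_⟩ <;>
          simp only [Matrix.add_apply, ha1, ha2, ha3, hb1, hb2, hb3, add_zero, smul_add]
        abel
  have hdι : ∀ (x : X) (n : ℕ),
      d (FreeAlgebra.ι k (x, n)) = FreeAlgebra.ι k (x, n + 1) := by
    intro x n; rw [hd, Φι]; simp
  have hd1 : d 1 = 0 := by rw [hd, map_one]; simp [Matrix.one_fin_two]
  have hleib : ∀ a b : A, d (a * b) = d a * b + a * d b + lam • (d a * d b) := by
    intro a b
    obtain ⟨ha1, ha2, ha3⟩ := key a
    obtain ⟨hb1, hb2, hb3⟩ := key b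
    rw [hd, map_mul]
    simp only [Matrix.mul_apply, Fin.sum_univ_two, ha2, hb3, ← hd]
    rw [mul_add, mul_smul_comm]
    abel
  refine ⟨d, hdι, hd1, hleib, ?_⟩
  intro R _ _ dR hdRmul hdR1 f
  -- the candidate hom
  let fb : A →ₐ[k] R := FreeAlgebra.lift k (fun p : X × ℕ => (⇑dR)^[p.2] (f p.1))
  have fbι : ∀ p : X × ℕ, fb (FreeAlgebra.ι k p) = (⇑dR)^[p.2] (f p.1) := fun p =>
    FreeAlgebra.lift_ι_apply _ _
  have hcomm : ∀ a : A, fb (d a) = dR (fb a) := by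
    have hhom : (AlgHom.mapMatrix fb).comp Φ = (diffRep lam dR hdRmul hdR1).comp fb := by
      apply FreeAlgebra.hom_ext
      funext p
      simp only [AlgHom.coe_comp, Function.comp_apply, Φι, AlgHom.mapMatrix_apply,
        diffRep_apply, fbι]
      ext i j
      fin_cases i <;> fin_cases j <;>
        simp [fbι, Function.iterate_succ_apply']
    intro a
    have := congrArg (fun g : A →ₐ[k] Matrix (Fin 2) (Fin 2) R => g a 0 1) hhom
    simpa [hd, Matrix.map_apply] using this
  refine ⟨fb, ⟨fun x => fbι (x, 0), hcomm⟩, ?_⟩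
  rintro g ⟨hg0, hgd⟩
  apply FreeAlgebra.hom_ext
  funext p
  obtain ⟨x, n⟩ := p
  simp only [Function.comp_apply, fbι]
  induction n with
  | zero => simpa using hg0 x
  | succ n ih =>
      have : FreeAlgebra.ι k (x, n + 1) = d (FreeAlgebra.ι k (x, n)) := (hdι x n).symm
      rw [this, hgd, ih, Function.iterate_succ_apply']
end

section
/- Let A be a k-algebra with presentation A = k⟨X⟩/I_A. Let ℑ_A be the differential ideal of the free differential algebra D_λ(X) = k⟨Δ(X)⟩ (weight λ) generated by the image of I_A under the embedding k⟨X⟩ → k⟨Δ(X)⟩, x ↦ x^(0). Then the quotient differential algebra k⟨Δ(X)⟩/ℑ_A, together with the induced algebra map A → k⟨Δ(X)⟩/ℑ_A, satisfies the universal property of the free differential algebra of weight λ on the algebra A: for any differential algebra (R,d) of weight λ and any algebra homomorphism φ : A → R, there exists a unique differential algebra homomorphism φ̄ : k⟨Δ(X)⟩/ℑ_A → R with φ̄ ∘ i_A = φ. -/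
universe u v u₂ u₃ w

/-- Let `A = k⟨X⟩/I_A` be a presented algebra (given via a surjection `π` with kernel `I_A`),
let `ℑ_A` be the differential ideal of the free differential algebra `k⟨Δ(X)⟩` of weight `λ`
generated by the image of `I_A` under `x ↦ x^(0)`, and let `Q` be the quotient differential
algebra `k⟨Δ(X)⟩/ℑ_A` (given via a surjection `p` with kernel `ℑ_A` commuting with the
derivations). Then `Q`, with the induced map `i_A : A → Q`, satisfies the universal property
of the free differential algebra of weight `λ` on the algebra `A`. -/
theorem free_differential_algebra_on_algebra (k : Type u) [Field k] [CharZero k] (lam : k)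
    (X : Type v)
    (d : FreeAlgebra k (X × ℕ) →ₗ[k] FreeAlgebra k (X × ℕ))
    (hgen : ∀ (x : X) (n : ℕ), d (FreeAlgebra.ι k (x, n)) = FreeAlgebra.ι k (x, n + 1))
    (h1 : d 1 = 0)
    (hleib : ∀ a b : FreeAlgebra k (X × ℕ),
      d (a * b) = d a * b + a * d b + lam • (d a * d b))
    (A : Type u₂) [Ring A] [Algebra k A]
    (π : FreeAlgebra k X →ₐ[k] A) (hπ : Function.Surjective π)
    (IA : Set (FreeAlgebra k X)) (hIA : IA = {a | π a = 0})
    (hatι : FreeAlgebra k X →ₐ[k] FreeAlgebra k (X × ℕ))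
    (hhat : hatι = FreeAlgebra.lift k fun x => FreeAlgebra.ι k (x, 0))
    (J : TwoSidedIdeal (FreeAlgebra k (X × ℕ)))
    (hJ : J = sInf {I : TwoSidedIdeal (FreeAlgebra k (X × ℕ)) |
      (∀ a ∈ IA, hatι a ∈ I) ∧ ∀ b ∈ I, d b ∈ I})
    (Q : Type u₃) [Ring Q] [Algebra k Q] (dQ : Q →ₗ[k] Q)
    (p : FreeAlgebra k (X × ℕ) →ₐ[k] Q) (hp : Function.Surjective p)
    (hker : ∀ a, p a = 0 ↔ a ∈ J)
    (hcomm : ∀ a, p (d a) = dQ (p a))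
    (iA : A →ₐ[k] Q) (hiA : ∀ a, iA (π a) = p (hatι a)) :
    ∀ (R : Type w) [Ring R] [Algebra k R] (dR : R →ₗ[k] R),
      (∀ x y : R, dR (x * y) = dR x * y + x * dR y + lam • (dR x * dR y)) →
      dR 1 = 0 →
      ∀ φ : A →ₐ[k] R,
        ∃! ψ : Q →ₐ[k] R, ψ.comp iA = φ ∧ ∀ q, ψ (dQ q) = dR (ψ q) := by
  intro R _ _ dR hRleib hR1 φ
  classical
  set f : X × ℕ → R := fun xn => dR^[xn.2] (φ (π (FreeAlgebra.ι k xn.1))) with hf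
  set Φ : FreeAlgebra k (X × ℕ) →ₐ[k] R := FreeAlgebra.lift k f with hΦ
  -- Φ commutes with the derivations
  have hΦd : ∀ a, Φ (d a) = dR (Φ a) := by
    intro a
    induction a using FreeAlgebra.induction with
    | grade0 c =>
        rw [Algebra.algebraMap_eq_smul_one, map_smul, h1, smul_zero, map_zero,
          map_smul, map_one, map_smul, hR1, smul_zero]
    | grade1 x =>
        obtain ⟨x, n⟩ := x
        rw [hgen x n]
        show Φ (FreeAlgebra.ι k (x, n + 1)) = dR (Φ (FreeAlgebra.ι k (x, n)))
        rw [hΦ, FreeAlgebra.lift_ι_apply, FreeAlgebra.lift_ι_apply, hf]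
        exact Function.iterate_succ_apply' dR n _
    | mul a b ha hb =>
        rw [hleib a b, map_add, map_add, map_mul, map_mul, map_smul, map_mul,
          ha, hb, map_mul, hRleib]
    | add a b ha hb =>
        rw [map_add, map_add, map_add, ha, hb, map_add]
  -- Φ ∘ hatι = φ ∘ π
  have hcomp : ∀ a, Φ (hatι a) = φ (π a) := by
    have : Φ.comp hatι = φ.comp π := by
      apply FreeAlgebra.hom_ext
      funext x
      simp only [Function.comp_apply, AlgHom.coe_comp, hhat, FreeAlgebra.lift_ι_apply, hΦ, hf,
        Function.iterate_zero_apply]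
    intro a
    exact congrArg (fun g => g a) (congrArg (DFunLike.coe) this)
  -- J is contained in the kernel of Φ
  have hJker : J ≤ TwoSidedIdeal.ker Φ := by
    rw [hJ]
    apply sInf_le
    constructor
    · intro a ha
      rw [TwoSidedIdeal.mem_ker, hcomp]
      rw [hIA] at ha
      rw [ha, map_zero]
    · intro b hb
      rw [TwoSidedIdeal.mem_ker] at hb ⊢
      rw [hΦd, hb, map_zero]
  have hpΦ : ∀ a b : FreeAlgebra k (X × ℕ), p a = p b → Φ a = Φ b := by
    intro a b hab
    have : a - b ∈ J := (hker _).1 (by rw [map_sub, hab, sub_self])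
    have h2 := hJker this
    rw [TwoSidedIdeal.mem_ker, map_sub, sub_eq_zero] at h2
    exact h2
  -- right inverse of p
  set g : Q → FreeAlgebra k (X × ℕ) := Function.surjInv hp with hgdef
  have hg : ∀ q, p (g q) = q := fun q => Function.surjInv_eq hp q
  set ψ : Q →ₐ[k] R :=
    { toFun := fun q => Φ (g q)
      map_one' := show Φ (g 1) = 1 by
        rw [hpΦ (g 1) 1 (by rw [hg, map_one]), map_one]
      map_mul' := fun q₁ q₂ => show Φ (g (q₁ * q₂)) = Φ (g q₁) * Φ (g q₂) by
        rw [hpΦ (g (q₁ * q₂)) (g q₁ * g q₂) (by rw [hg, map_mul, hg, hg]), map_mul]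
      map_zero' := show Φ (g 0) = 0 by
        rw [hpΦ (g 0) 0 (by rw [hg, map_zero]), map_zero]
      map_add' := fun q₁ q₂ => show Φ (g (q₁ + q₂)) = Φ (g q₁) + Φ (g q₂) by
        rw [hpΦ (g (q₁ + q₂)) (g q₁ + g q₂) (by rw [hg, map_add, hg, hg]), map_add]
      commutes' := fun c => show Φ (g (algebraMap k Q c)) = algebraMap k R c by
        rw [hpΦ (g (algebraMap k Q c)) (algebraMap k _ c)
          (by rw [hg, AlgHom.commutes]), AlgHom.commutes] } with hψdef
  have hψp : ∀ a, ψ (p a) = Φ a := fun a => hpΦ _ _ (hg _)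
  refine ⟨ψ, ⟨?_, ?_⟩, ?_⟩
  · -- ψ ∘ iA = φ
    ext a
    obtain ⟨b, rfl⟩ := hπ a
    show ψ (iA (π b)) = φ (π b)
    rw [hiA, hψp, hcomp]
  · -- ψ commutes with derivations
    intro q
    obtain ⟨a, rfl⟩ := hp q
    rw [← hcomm, hψp, hψp, hΦd]
  · -- uniqueness
    intro ψ' ⟨hψ'1, hψ'2⟩
    have key : ψ'.comp p = Φ := by
      apply FreeAlgebra.hom_ext
      funext x
      obtain ⟨x, n⟩ := x
      show ψ' (p (FreeAlgebra.ι k (x, n))) = Φ (FreeAlgebra.ι k (x, n))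
      rw [hΦ, FreeAlgebra.lift_ι_apply]
      induction n with
      | zero =>
          have h0 : (FreeAlgebra.ι k (x, 0) : FreeAlgebra k (X × ℕ)) =
              hatι (FreeAlgebra.ι k x) := by
            rw [hhat, FreeAlgebra.lift_ι_apply]
          rw [h0, ← hiA]
          exact congrArg (fun g => g (π (FreeAlgebra.ι k x)))
            (congrArg (DFunLike.coe) hψ'1)
      | succ n ih =>
          rw [← hgen x n, hcomm, hψ'2, ih, hf]
          exact (Function.iterate_succ_apply' dR n _).symm
    ext q
    obtain ⟨a, rfl⟩ := hp q
    rw [hψp]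
    exact congrArg (fun g => g a) (congrArg (DFunLike.coe) key)
end

section
/- Let A be a commutative k-algebra with presentation A = k[X]/I_A, and let ℑ_A be the differential ideal of the free commutative differential algebra k[Δ(X)] of weight λ generated by the image of I_A under x ↦ x^(0). Then k[Δ(X)]/ℑ_A satisfies the universal property of the free commutative differential algebra of weight λ on A. -/
universe u v w

/-- Let `A = k[X]/I_A` be a presented commutative algebra and let `ℑ_A` be the differential
ideal of the free commutative differential algebra `k[Δ(X)]` of weight `λ` generated by the
image of `I_A` under `x ↦ x^(0)`. Then `k[Δ(X)]/ℑ_A` satisfies the universal property of the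
free commutative differential algebra of weight `λ` on `A`. -/
theorem free_comm_differential_algebra_on_algebra (k : Type u) [Field k] [CharZero k]
    (lam : k) (X : Type v)
    (d : MvPolynomial (X × ℕ) k →ₗ[k] MvPolynomial (X × ℕ) k)
    (hgen : ∀ (x : X) (n : ℕ), d (MvPolynomial.X (x, n)) = MvPolynomial.X (x, n + 1))
    (h1 : d 1 = 0)
    (hleib : ∀ a b : MvPolynomial (X × ℕ) k,
      d (a * b) = d a * b + a * d b + lam • (d a * d b))
    (IA : Ideal (MvPolynomial X k))
    (hatι : MvPolynomial X k →ₐ[k] MvPolynomial (X × ℕ) k)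
    (hhat : hatι = MvPolynomial.aeval fun x => MvPolynomial.X (x, 0))
    (J : Ideal (MvPolynomial (X × ℕ) k))
    (hJ : J = sInf {I : Ideal (MvPolynomial (X × ℕ) k) |
      (∀ a ∈ IA, hatι a ∈ I) ∧ ∀ b ∈ I, d b ∈ I})
    (iA : (MvPolynomial X k ⧸ IA) →ₐ[k] (MvPolynomial (X × ℕ) k ⧸ J))
    (hiA : ∀ a, iA (Ideal.Quotient.mk IA a) = Ideal.Quotient.mk J (hatι a)) :
    ∀ (R : Type w) [CommRing R] [Algebra k R] (dR : R →ₗ[k] R),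
      (∀ x y : R, dR (x * y) = dR x * y + x * dR y + lam • (dR x * dR y)) →
      dR 1 = 0 →
      ∀ φ : (MvPolynomial X k ⧸ IA) →ₐ[k] R,
        ∃! ψ : (MvPolynomial (X × ℕ) k ⧸ J) →ₐ[k] R,
          ψ.comp iA = φ ∧
          ∀ f : MvPolynomial (X × ℕ) k,
            ψ (Ideal.Quotient.mk J (d f)) = dR (ψ (Ideal.Quotient.mk J f)) := by
  intro R _ _ dR hdR hdR1 φ
  classical
  set g : X × ℕ → R :=
    fun p => dR^[p.2] (φ (Ideal.Quotient.mk IA (MvPolynomial.X p.1))) with hg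
  set Ψ : MvPolynomial (X × ℕ) k →ₐ[k] R := MvPolynomial.aeval g with hΨ
  have hΨX : ∀ (x : X) (n : ℕ),
      Ψ (MvPolynomial.X (x, n)) = dR^[n] (φ (Ideal.Quotient.mk IA (MvPolynomial.X x))) := by
    intro x n; simp [hΨ, hg]
  have hdC : ∀ a : k, d (MvPolynomial.C a) = 0 := by
    intro a
    have hCa : (MvPolynomial.C a : MvPolynomial (X × ℕ) k) = a • 1 := by
      rw [Algebra.smul_def, mul_one]; rfl
    rw [hCa, map_smul, h1, smul_zero]
  have hcomm : ∀ p, Ψ (d p) = dR (Ψ p) := by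
    intro p
    induction p using MvPolynomial.induction_on with
    | C a =>
      rw [hdC, map_zero]
      have hca : Ψ (MvPolynomial.C a) = algebraMap k R a := by simp
      rw [hca, Algebra.algebraMap_eq_smul_one, map_smul, hdR1, smul_zero]
    | add p q hp hq => rw [map_add, map_add, map_add, map_add, hp, hq]
    | mul_X p i hp =>
      obtain ⟨x, n⟩ := i
      rw [hleib, hgen, map_add, map_add, map_mul, map_mul, map_smul, map_mul, hp,
        hΨX, hΨX, Function.iterate_succ_apply', map_mul, hΨX, hdR]
  -- Ψ composed with the inclusion of variables agrees with φ
  have hkey : ∀ a : MvPolynomial X k, Ψ (hatι a) = φ (Ideal.Quotient.mk IA a) := by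
    have : Ψ.comp hatι = φ.comp (Ideal.Quotient.mkₐ k IA) := by
      apply MvPolynomial.algHom_ext
      intro x
      simp [hhat, hΨX]
    intro a
    have := AlgHom.congr_fun this a
    simpa using this
  -- J is contained in the kernel of Ψ
  have hJker : J ≤ RingHom.ker Ψ.toRingHom := by
    rw [hJ]
    apply sInf_le
    constructor
    · intro a ha
      rw [RingHom.mem_ker]
      show Ψ (hatι a) = 0
      rw [hkey, Ideal.Quotient.eq_zero_iff_mem.mpr ha, map_zero]
    · intro b hb
      rw [RingHom.mem_ker] at hb ⊢
      show Ψ (d b) = 0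
      rw [hcomm]
      show dR (Ψ b) = 0
      rw [show Ψ b = 0 from hb, map_zero]
  have hJ0 : ∀ a ∈ J, Ψ a = 0 := fun a ha => RingHom.mem_ker.mp (hJker ha)
  set ψ : (MvPolynomial (X × ℕ) k ⧸ J) →ₐ[k] R := Ideal.Quotient.liftₐ J Ψ hJ0 with hψdef
  have hψmk : ∀ f, ψ (Ideal.Quotient.mk J f) = Ψ f := by
    intro f
    simp [hψdef]
    exact Ideal.Quotient.lift_mk J _ hJ0
  have hψ1 : ψ.comp iA = φ := by
    apply AlgHom.ext
    intro q
    obtain ⟨a, rfl⟩ := Ideal.Quotient.mk_surjective q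
    rw [AlgHom.comp_apply, hiA, hψmk, hkey]
  have hψ2 : ∀ f, ψ (Ideal.Quotient.mk J (d f)) = dR (ψ (Ideal.Quotient.mk J f)) := by
    intro f
    rw [hψmk, hψmk, hcomm]
  -- any ψ'' satisfying the conditions takes the prescribed values on variables
  have hval : ∀ ψ'' : (MvPolynomial (X × ℕ) k ⧸ J) →ₐ[k] R,
      ψ''.comp iA = φ →
      (∀ f, ψ'' (Ideal.Quotient.mk J (d f)) = dR (ψ'' (Ideal.Quotient.mk J f))) →
      ∀ (x : X) (n : ℕ), ψ'' (Ideal.Quotient.mk J (MvPolynomial.X (x, n))) =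
        dR^[n] (φ (Ideal.Quotient.mk IA (MvPolynomial.X x))) := by
    intro ψ'' hc hd' x n
    induction n with
    | zero =>
      have hx0 : (MvPolynomial.X (x, 0) : MvPolynomial (X × ℕ) k) =
          hatι (MvPolynomial.X x) := by simp [hhat]
      rw [hx0, ← hiA, ← AlgHom.comp_apply, hc, Function.iterate_zero, id_eq]
    | succ n ih =>
      rw [← hgen, hd', ih, Function.iterate_succ_apply']
  refine ⟨ψ, ⟨hψ1, hψ2⟩, ?_⟩
  intro ψ' ⟨hc, hd'⟩
  have hcomp : ψ'.comp (Ideal.Quotient.mkₐ k J) = ψ.comp (Ideal.Quotient.mkₐ k J) := by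
    apply MvPolynomial.algHom_ext
    rintro ⟨x, n⟩
    simp only [AlgHom.comp_apply, Ideal.Quotient.mkₐ_eq_mk]
    rw [hval ψ' hc hd' x n, hval ψ hψ1 hψ2 x n]
  apply AlgHom.ext
  intro q
  obtain ⟨f, rfl⟩ := Ideal.Quotient.mk_surjective q
  have := AlgHom.congr_fun hcomp f
  simpa using this
end

section
/- In the free differential algebra k⟨Δ(X)⟩ of weight λ ≠ 0 on a well-ordered set X, for generators u_1, ..., u_r ∈ Δ(X) and i ≥ 0, the leading monomial of d_X^i(u_1 ⋯ u_r) with respect to the deg-lex order induced by the order x^(m) ≺ y^(n) iff (m < n, or m = n and x < y) is d_X^i(u_1) ⋯ d_X^i(u_r), and its coefficient in d_X^i(u_1 ⋯ u_r) is λ^{(r-1)i}. -/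
/-- The letter `x^(n)` shifted by `i`, i.e. `x^(n+i)`. -/
def shiftLetter {X : Type*} (i : ℕ) (a : X × ℕ) : X × ℕ := (a.1, a.2 + i)

/-- The order on `Δ(X) = X × ℕ`: `x^(m) ≺ y^(n)` iff `m < n`, or `m = n` and `x < y`. -/
def deltaLt {X : Type*} [LT X] (a b : X × ℕ) : Prop :=
  a.2 < b.2 ∨ (a.2 = b.2 ∧ a.1 < b.1)

/-- The deg-lex order on words in `Δ(X)`: longer words are smaller, and words of equal
length are compared lexicographically. -/
def wordLt {X : Type*} [LT X] (u v : List (X × ℕ)) : Prop :=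
  v.length < u.length ∨ (u.length = v.length ∧ List.Lex deltaLt u v)

section Aux

open MonoidAlgebra FreeMonoid

variable {X : Type*}

/-- conditional shift by one -/
def shiftIf (b : Bool) (a : X × ℕ) : X × ℕ := if b then shiftLetter 1 a else a

lemma zip_shift_shift : ∀ (e c : List ℕ) (v : List (X × ℕ)),
    List.zipWith shiftLetter e (List.zipWith shiftLetter c v)
      = List.zipWith shiftLetter (List.zipWith (· + ·) c e) v := by
  intro e c v
  induction v generalizing c e with
  | nil => simp
  | cons x v ih =>
    cases c with
    | nil => simp
    | cons a c =>
      cases e with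
      | nil => simp
      | cons b e => simp [shiftLetter, ih, Nat.add_assoc]

lemma zip_shiftIf (e : List Bool) (v : List (X × ℕ)) :
    List.zipWith shiftIf e v
      = List.zipWith shiftLetter (e.map fun b => cond b 1 0) v := by
  induction e generalizing v with
  | nil => simp
  | cons b e ih =>
    cases v with
    | nil => simp
    | cons x v => cases b <;> simp [shiftIf, shiftLetter, ih]

lemma zip_replicate (m : ℕ) : ∀ (v : List (X × ℕ)),
    List.zipWith shiftLetter (List.replicate v.length m) v = v.map (shiftLetter m)
  | [] => rfl
  | x :: v => by
      simp only [List.length_cons, List.replicate_succ, List.zipWith_cons_cons,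
        List.map_cons, zip_replicate m v]

lemma zip_eq_map {m : ℕ} : ∀ (c : List ℕ) (v : List (X × ℕ)), c.length = v.length →
    List.zipWith shiftLetter c v = v.map (shiftLetter m) →
    c = List.replicate v.length m := by
  intro c
  induction c with
  | nil =>
    intro v h _
    rw [← h]
    rfl
  | cons a c ih =>
    intro v hlen h
    cases v with
    | nil => simp at hlen
    | cons x v =>
      simp only [List.zipWith_cons_cons, List.map_cons, List.cons.injEq] at h
      have ha : a = m := by
        have := congrArg Prod.snd h.1
        simp only [shiftLetter] at this
        omega
      simp only [List.length_cons, List.replicate_succ, List.cons.injEq]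
      exact ⟨ha, ih v (by simpa using hlen) h.2⟩

lemma eq_replicate_of_zip_add {i : ℕ} : ∀ (c e : List ℕ), c.length = e.length →
    (∀ x ∈ c, x ≤ i) → (∀ x ∈ e, x ≤ 1) →
    List.zipWith (· + ·) c e = List.replicate c.length (i + 1) →
    c = List.replicate c.length i := by
  intro c
  induction c with
  | nil => simp
  | cons a c ih =>
    intro e hlen hc he h
    cases e with
    | nil => simp at hlen
    | cons b e =>
      simp only [List.zipWith_cons_cons, List.length_cons, List.replicate_succ,
        List.cons.injEq] at h ⊢
      have ha : a = i := by
        have h1 := hc a (by simp)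
        have h2 := he b (by simp)
        omega
      refine ⟨ha, ih e (by simpa using hlen) (fun x hx => hc x (by simp [hx]))
        (fun x hx => he x (by simp [hx])) h.2⟩

lemma zip_add_le {i : ℕ} : ∀ (c e : List ℕ), (∀ x ∈ c, x ≤ i) → (∀ x ∈ e, x ≤ 1) →
    ∀ x ∈ List.zipWith (· + ·) c e, x ≤ i + 1 := by
  intro c
  induction c with
  | nil => simp
  | cons a c ih =>
    intro e hc he x hx
    cases e with
    | nil => simp at hx
    | cons b e =>
      simp only [List.zipWith_cons_cons, List.mem_cons] at hx
      rcases hx with rfl | hx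
      · have h1 := hc a (by simp)
        have h2 := he b (by simp)
        omega
      · exact ih e (fun y hy => hc y (by simp [hy])) (fun y hy => he y (by simp [hy])) x hx

lemma zip_shiftIf_false : ∀ (t : List (X × ℕ)),
    List.zipWith shiftIf (List.replicate t.length false) t = t
  | [] => rfl
  | x :: t => by
      simp only [List.length_cons, List.replicate_succ, List.zipWith_cons_cons,
        zip_shiftIf_false t]
      simp [shiftIf]

lemma map_shift_succ (i : ℕ) (l : List (X × ℕ)) :
    List.map (shiftLetter 1) (List.map (shiftLetter i) l)
      = List.map (shiftLetter (i + 1)) l := by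
  induction l with
  | nil => rfl
  | cons x l ih => simp [shiftLetter, ih, Nat.add_assoc]

lemma lex_of_lt [LinearOrder X] {i : ℕ} : ∀ (c : List ℕ) (v : List (X × ℕ)),
    c.length = v.length → (∀ x ∈ c, x ≤ i) → c ≠ List.replicate v.length i →
    List.Lex deltaLt (List.zipWith shiftLetter c v) (v.map (shiftLetter i)) := by
  intro c
  induction c with
  | nil =>
    intro v hlen _ hne
    exfalso
    apply hne
    cases v with
    | nil => rfl
    | cons x v => simp at hlen
  | cons a c ih =>
    intro v hlen hb hne
    cases v with
    | nil => simp at hlen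
    | cons x v =>
      simp only [List.zipWith_cons_cons, List.map_cons]
      by_cases ha : a = i
      · subst ha
        refine List.Lex.cons (ih v (by simpa using hlen)
          (fun y hy => hb y (by simp [hy])) ?_)
        intro h
        apply hne
        simp [List.length_cons, List.replicate_succ, h]
      · have hlt : a < i := lt_of_le_of_ne (hb a (by simp)) ha
        apply List.Lex.rel
        left
        simp only [shiftLetter]
        omega

variable {k : Type*} [Field k]
  (lam : k)
  (d : MonoidAlgebra k (FreeMonoid (X × ℕ)) →ₗ[k] MonoidAlgebra k (FreeMonoid (X × ℕ)))

lemma d_apply_sum (y : MonoidAlgebra k (FreeMonoid (X × ℕ))) (m : FreeMonoid (X × ℕ)) :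
    (d y).coeff m = ∑ u ∈ y.coeff.support, y.coeff u * (d (MonoidAlgebra.single u 1)).coeff m := by
  conv_lhs => rw [← MonoidAlgebra.sum_coeff_single y]
  rw [Finsupp.sum, map_sum, MonoidAlgebra.coeff_sum, Finsupp.finsetSum_apply]
  refine Finset.sum_congr rfl fun u _ => ?_
  have h1 : (MonoidAlgebra.single u (y.coeff u) : MonoidAlgebra k (FreeMonoid (X × ℕ)))
      = y.coeff u • MonoidAlgebra.single u (1 : k) := by
    rw [MonoidAlgebra.smul_single, smul_eq_mul, mul_one]
  rw [h1, map_smul, MonoidAlgebra.coeff_smul_apply, smul_eq_mul]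

section leib

variable (hgen : ∀ a : X × ℕ,
      d (MonoidAlgebra.single (FreeMonoid.of a) 1)
        = MonoidAlgebra.single (FreeMonoid.of (shiftLetter 1 a)) 1)
  (hleib : ∀ p q, d (p * q) = d p * q + p * d q + lam • (d p * d q))

include hgen hleib in
lemma d_cons (a : X × ℕ) (t : List (X × ℕ)) :
    d (MonoidAlgebra.single (ofList (a :: t)) 1)
      = MonoidAlgebra.single (ofList (shiftLetter 1 a :: t)) 1
        + MonoidAlgebra.single (of a) 1 * d (MonoidAlgebra.single (ofList t) 1)
        + lam • (MonoidAlgebra.single (of (shiftLetter 1 a)) 1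
            * d (MonoidAlgebra.single (ofList t) 1)) := by
  have h1 : MonoidAlgebra.single (ofList (a :: t)) (1 : k)
      = MonoidAlgebra.single (of a) 1 * MonoidAlgebra.single (ofList t) 1 := by
    rw [MonoidAlgebra.single_mul_single, one_mul, ofList_cons]
  rw [h1, hleib, hgen]
  congr 1
  congr 1
  rw [MonoidAlgebra.single_mul_single, one_mul, ofList_cons]

include hgen hleib in
lemma d_lead : ∀ (t : List (X × ℕ)) (a : X × ℕ),
    (d (MonoidAlgebra.single (ofList (a :: t)) 1)).coeff
        (ofList ((a :: t).map (shiftLetter 1))) = lam ^ t.length := by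
  intro t
  induction t with
  | nil =>
    intro a
    show (d (MonoidAlgebra.single (FreeMonoid.of a) 1)).coeff _ = _
    rw [hgen]
    show (Finsupp.single (FreeMonoid.of (shiftLetter 1 a)) (1 : k)) _ = _
    simp only [List.length_nil, pow_zero]
    exact Finsupp.single_eq_same
  | cons b t' ih =>
    intro a
    rw [d_cons lam d hgen hleib]
    rw [MonoidAlgebra.coeff_add, MonoidAlgebra.coeff_add, Finsupp.add_apply, Finsupp.add_apply]
    have htarget : ofList ((a :: b :: t').map (shiftLetter 1))
        = of (shiftLetter 1 a) * ofList ((b :: t').map (shiftLetter 1)) := rfl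
    have e1 : (MonoidAlgebra.single (ofList (shiftLetter 1 a :: b :: t')) (1 : k)).coeff
        (ofList ((a :: b :: t').map (shiftLetter 1))) = 0 := by
      rw [MonoidAlgebra.coeff_single]
      apply Finsupp.single_eq_of_ne'
      intro h
      have := congrArg FreeMonoid.toList h
      simp only [toList_ofList, List.map_cons, List.cons.injEq] at this
      have hb : b = shiftLetter 1 b := this.2.1
      have := congrArg Prod.snd hb
      simp [shiftLetter] at this
    have e2 : (MonoidAlgebra.single (of a) (1 : k)
          * d (MonoidAlgebra.single (ofList (b :: t')) 1)).coeff
        (ofList ((a :: b :: t').map (shiftLetter 1))) = 0 := by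
      apply MonoidAlgebra.single_mul_apply_of_not_exists_mul
      rintro ⟨z, hz⟩
      have := congrArg FreeMonoid.toList hz
      simp only [toList_ofList, List.map_cons, toList_of_mul, List.cons.injEq] at this
      have := congrArg Prod.snd this.1
      simp [shiftLetter] at this
    have e3 : (MonoidAlgebra.single (of (shiftLetter 1 a)) (1 : k)
          * d (MonoidAlgebra.single (ofList (b :: t')) 1)).coeff
        (ofList ((a :: b :: t').map (shiftLetter 1))) = lam ^ t'.length := by
      rw [htarget]
      rw [MonoidAlgebra.coeff_single_mul_eq_mul_coeff _ (fun w _ => mul_right_inj (of (shiftLetter 1 a)))]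
      rw [one_mul, ih b]
    rw [e1, e2, MonoidAlgebra.coeff_smul_apply, e3, smul_eq_mul]
    rw [List.length_cons, pow_succ]
    ring

include hgen hleib in
lemma d_supp : ∀ (t : List (X × ℕ)) (a : X × ℕ) (w : FreeMonoid (X × ℕ)),
    (d (MonoidAlgebra.single (ofList (a :: t)) 1)).coeff w ≠ 0 →
    ∃ e : List Bool, e.length = t.length + 1 ∧ true ∈ e ∧
      FreeMonoid.toList w = List.zipWith shiftIf e (a :: t) := by
  intro t
  induction t with
  | nil =>
    intro a w hw
    rw [show (ofList [a] : FreeMonoid (X × ℕ)) = FreeMonoid.of a from rfl, hgen] at hw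
    have hwa : w = FreeMonoid.of (shiftLetter 1 a) := by
      by_contra h
      exact hw (Finsupp.single_eq_of_ne' fun h' => h h'.symm)
    refine ⟨[true], rfl, by simp, ?_⟩
    rw [hwa]
    simp [shiftIf, toList_of]
  | cons b t' ih =>
    intro a w hw
    rw [d_cons lam d hgen hleib, MonoidAlgebra.coeff_add, MonoidAlgebra.coeff_add, Finsupp.add_apply, Finsupp.add_apply] at hw
    classical
    have hcase : (MonoidAlgebra.single (ofList (shiftLetter 1 a :: b :: t')) (1 : k)).coeff w ≠ 0
        ∨ (MonoidAlgebra.single (of a) (1 : k)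
            * d (MonoidAlgebra.single (ofList (b :: t')) 1)).coeff w ≠ 0
        ∨ (MonoidAlgebra.single (of (shiftLetter 1 a)) (1 : k)
            * d (MonoidAlgebra.single (ofList (b :: t')) 1)).coeff w ≠ 0 := by
      by_contra h
      push_neg at h
      apply hw
      rw [h.1, h.2.1, MonoidAlgebra.coeff_smul_apply, h.2.2, smul_zero, add_zero, add_zero]
    rcases hcase with h | h | h
    · have hwa : w = ofList (shiftLetter 1 a :: b :: t') := by
        by_contra hne
        exact h (Finsupp.single_eq_of_ne' fun h' => hne h'.symm)
      refine ⟨true :: List.replicate (t'.length + 1) false, by simp, by simp, ?_⟩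
      rw [hwa]
      show shiftLetter 1 a :: b :: t' = _
      rw [List.zipWith_cons_cons]
      rw [show (t'.length + 1) = (b :: t').length from rfl, zip_shiftIf_false]
      simp [shiftIf]
    · have hmem : w ∈ (MonoidAlgebra.single (of a) (1 : k)
          * d (MonoidAlgebra.single (ofList (b :: t')) 1)).coeff.support :=
        Finsupp.mem_support_iff.mpr h
      have := MonoidAlgebra.support_coeff_single_mul_subset
        (d (MonoidAlgebra.single (ofList (b :: t')) 1)) (1 : k) (of a) hmem
      rcases Finset.mem_image.mp this with ⟨z, hz, hzw⟩
      rcases ih b z (Finsupp.mem_support_iff.mp hz) with ⟨e, helen, htr, hze⟩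
      refine ⟨false :: e, by simp [helen], by simp [htr], ?_⟩
      rw [← hzw, toList_of_mul, List.zipWith_cons_cons, ← hze]
      simp [shiftIf]
    · have hmem : w ∈ (MonoidAlgebra.single (of (shiftLetter 1 a)) (1 : k)
          * d (MonoidAlgebra.single (ofList (b :: t')) 1)).coeff.support :=
        Finsupp.mem_support_iff.mpr h
      have := MonoidAlgebra.support_coeff_single_mul_subset
        (d (MonoidAlgebra.single (ofList (b :: t')) 1)) (1 : k) (of (shiftLetter 1 a)) hmem
      rcases Finset.mem_image.mp this with ⟨z, hz, hzw⟩
      rcases ih b z (Finsupp.mem_support_iff.mp hz) with ⟨e, helen, htr, hze⟩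
      refine ⟨true :: e, by simp [helen], by simp, ?_⟩
      rw [← hzw, toList_of_mul, List.zipWith_cons_cons, ← hze]
      simp [shiftIf]

include hgen hleib in
lemma d_lead' (l : List (X × ℕ)) (hl : l ≠ []) :
    (d (MonoidAlgebra.single (ofList l) 1)).coeff (ofList (l.map (shiftLetter 1)))
      = lam ^ (l.length - 1) := by
  cases l with
  | nil => exact absurd rfl hl
  | cons a t =>
    have := d_lead lam d hgen hleib t a
    simpa using this

include hgen hleib in
lemma d_supp' (l : List (X × ℕ)) (hl : l ≠ []) (w : FreeMonoid (X × ℕ))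
    (h : (d (MonoidAlgebra.single (ofList l) 1)).coeff w ≠ 0) :
    ∃ e : List Bool, e.length = l.length ∧ true ∈ e ∧
      FreeMonoid.toList w = List.zipWith shiftIf e l := by
  cases l with
  | nil => exact absurd rfl hl
  | cons a t =>
    rcases d_supp lam d hgen hleib t a w h with ⟨e, helen, htr, hwe⟩
    exact ⟨e, by simpa using helen, htr, hwe⟩

include hgen hleib in
lemma iter_main (v : List (X × ℕ)) (hv : v ≠ []) : ∀ i : ℕ,
    (((⇑d)^[i] (MonoidAlgebra.single (ofList v) 1)).coeff (ofList (v.map (shiftLetter i)))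
        = lam ^ ((v.length - 1) * i)) ∧
    (∀ w : FreeMonoid (X × ℕ),
      ((⇑d)^[i] (MonoidAlgebra.single (ofList v) 1)).coeff w ≠ 0 →
      ∃ c : List ℕ, c.length = v.length ∧ (∀ x ∈ c, x ≤ i) ∧
        FreeMonoid.toList w = List.zipWith shiftLetter c v) := by
  intro i
  induction i with
  | zero =>
    have hmap : v.map (shiftLetter 0) = v := by
      have h0 : shiftLetter 0 = (id : X × ℕ → X × ℕ) := funext fun a => rfl
      rw [h0, List.map_id]
    constructor
    · simp only [Function.iterate_zero, id_eq, hmap, Nat.mul_zero, pow_zero]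
      exact Finsupp.single_eq_same
    · intro w hw
      simp only [Function.iterate_zero, id_eq] at hw
      have hwv : w = ofList v := by
        by_contra h
        exact hw (Finsupp.single_eq_of_ne' fun h' => h h'.symm)
      refine ⟨List.replicate v.length 0, by simp, by simp, ?_⟩
      rw [hwv, toList_ofList, zip_replicate, hmap]
  | succ i ih =>
    obtain ⟨iha, ihb⟩ := ih
    have hvlen : 0 < v.length := List.length_pos_iff.mpr hv
    rw [Function.iterate_succ_apply']
    set y := (⇑d)^[i] (MonoidAlgebra.single (ofList v) (1 : k)) with hy
    constructor
    · rw [d_apply_sum]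
      rw [Finset.sum_eq_single (ofList (v.map (shiftLetter i)))]
      · rw [iha]
        have hmap : (v.map (shiftLetter i)).map (shiftLetter 1)
            = v.map (shiftLetter (i + 1)) := map_shift_succ i v
        have hnil : v.map (shiftLetter i) ≠ [] := fun h => hv (by simpa using h)
        have := d_lead' lam d hgen hleib (v.map (shiftLetter i)) hnil
        rw [hmap, List.length_map] at this
        rw [this]
        rw [← pow_add]
        congr 1
      · intro b hb hbne
        rcases ihb b (Finsupp.mem_support_iff.mp hb) with ⟨c, hclen, hcb, hcw⟩
        have hQ : (d (MonoidAlgebra.single b 1)).coeff (ofList (v.map (shiftLetter (i + 1)))) = 0 := by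
          by_contra hQ
          have hblen : (FreeMonoid.toList b).length = v.length := by
            rw [hcw, List.length_zipWith, hclen, Nat.min_self]
          have hbnil : FreeMonoid.toList b ≠ [] := by
            intro h
            rw [h] at hblen
            simp only [List.length_nil] at hblen
            omega
          have hb' : MonoidAlgebra.single b (1 : k)
              = MonoidAlgebra.single (ofList (FreeMonoid.toList b)) 1 := by
            rw [ofList_toList]
          rw [hb'] at hQ
          rcases d_supp' lam d hgen hleib (FreeMonoid.toList b) hbnil _ hQ
            with ⟨e, helen, _, hwe⟩
          rw [toList_ofList] at hwe
          set e' : List ℕ := e.map fun b => cond b 1 0 with he'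
          have he'le : ∀ x ∈ e', x ≤ 1 := by
            intro x hx
            rw [he'] at hx
            rcases List.mem_map.mp hx with ⟨b', _, rfl⟩
            cases b' <;> simp
          have he'len : e'.length = v.length := by
            rw [he', List.length_map, helen, hblen]
          have hcomb : v.map (shiftLetter (i + 1))
              = List.zipWith shiftLetter (List.zipWith (· + ·) c e') v := by
            rw [hwe, zip_shiftIf, ← he', hcw, zip_shift_shift]
          have hrep : List.zipWith (· + ·) c e' = List.replicate v.length (i + 1) := by
            apply zip_eq_map _ v
            · rw [List.length_zipWith, hclen, he'len, Nat.min_self]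
            · exact hcomb.symm
          have hcrep : c = List.replicate c.length i := by
            apply eq_replicate_of_zip_add c e' (by rw [hclen, he'len]) hcb he'le
            rw [hrep, hclen]
          apply hbne
          have : FreeMonoid.toList b = v.map (shiftLetter i) := by
            rw [hcw, hcrep, hclen, zip_replicate]
          rw [← ofList_toList b, this]
        rw [hQ, mul_zero]
      · intro hns
        rw [Finsupp.notMem_support_iff.mp hns, zero_mul]
    · intro w hw
      rw [d_apply_sum] at hw
      have hex : ∃ u ∈ y.coeff.support, y.coeff u * (d (MonoidAlgebra.single u 1)).coeff w ≠ 0 := by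
        by_contra h
        push_neg at h
        exact hw (Finset.sum_eq_zero h)
      obtain ⟨u, hu, hne⟩ := hex
      have hQ : (d (MonoidAlgebra.single u 1)).coeff w ≠ 0 := by
        intro h
        exact hne (by rw [h, mul_zero])
      rcases ihb u (Finsupp.mem_support_iff.mp hu) with ⟨c, hclen, hcb, hcu⟩
      have hulen : (FreeMonoid.toList u).length = v.length := by
        rw [hcu, List.length_zipWith, hclen, Nat.min_self]
      have hunil : FreeMonoid.toList u ≠ [] := by
        intro h
        rw [h] at hulen
        simp only [List.length_nil] at hulen
        omega
      have hu' : MonoidAlgebra.single u (1 : k)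
          = MonoidAlgebra.single (ofList (FreeMonoid.toList u)) 1 := by
        rw [ofList_toList]
      rw [hu'] at hQ
      rcases d_supp' lam d hgen hleib (FreeMonoid.toList u) hunil w hQ
        with ⟨e, helen, _, hwe⟩
      set e' : List ℕ := e.map fun b => cond b 1 0 with he'
      have he'le : ∀ x ∈ e', x ≤ 1 := by
        intro x hx
        rw [he'] at hx
        rcases List.mem_map.mp hx with ⟨b', _, rfl⟩
        cases b' <;> simp
      have he'len : e'.length = v.length := by
        rw [he', List.length_map, helen, hulen]
      refine ⟨List.zipWith (· + ·) c e', ?_, ?_, ?_⟩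
      · rw [List.length_zipWith, hclen, he'len, Nat.min_self]
      · exact zip_add_le c e' hcb he'le
      · rw [hwe, zip_shiftIf, ← he', hcu, zip_shift_shift]

end leib

end Aux

/-- In the free differential algebra of weight `λ ≠ 0` on a well-ordered set `X`, the leading
monomial of `d^i(u₀u₁⋯uᵣ)` is `d^i(u₀)d^i(u₁)⋯d^i(uᵣ)`, with coefficient `λ^{r·i}`
(the word has `r+1` letters). -/
theorem leading_term_nonzero_weight (k : Type*) [Field k] [CharZero k]
    (X : Type*) [LinearOrder X] (hwo : WellFoundedLT X)
    (lam : k) (hlam : lam ≠ 0)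
    (d : MonoidAlgebra k (FreeMonoid (X × ℕ)) →ₗ[k] MonoidAlgebra k (FreeMonoid (X × ℕ)))
    (hgen : ∀ a : X × ℕ,
      d (MonoidAlgebra.single (FreeMonoid.of a) 1)
        = MonoidAlgebra.single (FreeMonoid.of (shiftLetter 1 a)) 1)
    (h1 : d 1 = 0)
    (hleib : ∀ p q, d (p * q) = d p * q + p * d q + lam • (d p * d q))
    (r : ℕ) (u0 : X × ℕ) (u : Fin r → X × ℕ) (i : ℕ) :
    ((⇑d)^[i] (MonoidAlgebra.single (FreeMonoid.ofList (u0 :: List.ofFn u)) (1 : k))).coeff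
        (FreeMonoid.ofList (List.map (shiftLetter i) (u0 :: List.ofFn u)))
      = lam ^ (r * i) ∧
    ∀ v : FreeMonoid (X × ℕ),
      v ≠ FreeMonoid.ofList (List.map (shiftLetter i) (u0 :: List.ofFn u)) →
      ((⇑d)^[i] (MonoidAlgebra.single (FreeMonoid.ofList (u0 :: List.ofFn u)) (1 : k))).coeff v ≠ 0 →
      wordLt (FreeMonoid.toList v) (List.map (shiftLetter i) (u0 :: List.ofFn u)) := by
  set V : List (X × ℕ) := u0 :: List.ofFn u with hV
  have hVnil : V ≠ [] := by simp [hV]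
  have hVlen : V.length = r + 1 := by simp [hV]
  obtain ⟨main1, main2⟩ := iter_main lam d hgen hleib V hVnil i
  constructor
  · rw [main1, hVlen]
    simp
  · intro w hwne hw
    rcases main2 w hw with ⟨c, hclen, hcb, hcw⟩
    right
    constructor
    · rw [hcw, List.length_zipWith, hclen, Nat.min_self, List.length_map]
    · rw [hcw]
      apply lex_of_lt c V hclen hcb
      intro hrep
      apply hwne
      have : FreeMonoid.toList w = V.map (shiftLetter i) := by
        rw [hcw, hrep, zip_replicate]
      rw [← FreeMonoid.ofList_toList w, this]
end

section
/- In the free differential algebra k⟨Δ(X)⟩ of weight λ = 0 on a well-ordered set X, for generators u_1, ..., u_r ∈ Δ(X) and i ≥ 0, the leading monomial of d_X^i(u_1 ⋯ u_r) with respect to the deg-lex order is d_X^i(u_1) u_2 ⋯ u_r, and its coefficient is 1. -/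
section Aux

set_option linter.unusedSectionVars false

variable {k : Type*} [Field k] {X : Type*} [LinearOrder X]

lemma ofFn_succ_eq {α : Type*} {n : ℕ} (f : Fin (n+1) → α) :
    List.ofFn f = f 0 :: List.ofFn (f ∘ Fin.succ) := by
  rw [List.ofFn_succ]; rfl

/-- The word obtained from `W` by shifting letter `j` by `c j`. -/
def shiftWord {X : Type*} {n : ℕ} (W : Fin n → X × ℕ) (c : Fin n → ℕ) :
    FreeMonoid (X × ℕ) :=
  FreeMonoid.ofList (List.ofFn fun j => shiftLetter (c j) (W j))

lemma shiftWord_inj {n : ℕ} (W : Fin n → X × ℕ) {c c' : Fin n → ℕ}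
    (h : shiftWord W c = shiftWord W c') : c = c' := by
  have h2 : (List.ofFn fun j => shiftLetter (c j) (W j))
      = List.ofFn fun j => shiftLetter (c' j) (W j) := h
  rw [List.ofFn_inj] at h2
  funext j
  have := congrFun h2 j
  simpa [shiftLetter, Prod.ext_iff] using this

lemma d_single_ofFn (d : MonoidAlgebra k (FreeMonoid (X × ℕ)) →ₗ[k] MonoidAlgebra k (FreeMonoid (X × ℕ)))
    (hgen : ∀ a : X × ℕ,
      d (MonoidAlgebra.single (FreeMonoid.of a) 1)
        = MonoidAlgebra.single (FreeMonoid.of (shiftLetter 1 a)) 1)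
    (h1 : d 1 = 0)
    (hleib : ∀ p q, d (p * q) = d p * q + p * d q) :
    ∀ (n : ℕ) (g : Fin n → X × ℕ),
      d (MonoidAlgebra.single (FreeMonoid.ofList (List.ofFn g)) 1)
        = ∑ j : Fin n, MonoidAlgebra.single
            (FreeMonoid.ofList (List.ofFn (Function.update g j (shiftLetter 1 (g j))))) 1 := by
  intro n
  induction n with
  | zero =>
    intro g
    simpa [MonoidAlgebra.one_def] using h1
  | succ n ih =>
    intro g
    have hmul : (MonoidAlgebra.single (FreeMonoid.ofList (List.ofFn g)) (1:k))
        = MonoidAlgebra.single (FreeMonoid.of (g 0)) 1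
          * MonoidAlgebra.single (FreeMonoid.ofList (List.ofFn (g ∘ Fin.succ))) 1 := by
      rw [MonoidAlgebra.single_mul_single, one_mul]
      congr 1
      rw [ofFn_succ_eq]
      rfl
    rw [hmul, hleib, hgen, ih, Fin.sum_univ_succ]
    congr 1
    · rw [MonoidAlgebra.single_mul_single, one_mul]
      congr 1
      have h0 : List.ofFn (Function.update g 0 (shiftLetter 1 (g 0)))
          = shiftLetter 1 (g 0) :: List.ofFn (g ∘ Fin.succ) := by
        rw [ofFn_succ_eq]
        have ht : Function.update g 0 (shiftLetter 1 (g 0)) ∘ Fin.succ = g ∘ Fin.succ := by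
          funext m
          simp [Function.update_of_ne (Fin.succ_ne_zero m)]
        rw [ht, Function.update_self]
      rw [h0]
      rfl
    · rw [Finset.mul_sum]
      refine Finset.sum_congr rfl fun j _ => ?_
      rw [MonoidAlgebra.single_mul_single, one_mul]
      congr 1
      have h0 : List.ofFn (Function.update g j.succ (shiftLetter 1 (g j.succ)))
          = g 0 :: List.ofFn (Function.update (g ∘ Fin.succ) j (shiftLetter 1 ((g ∘ Fin.succ) j))) := by
        rw [ofFn_succ_eq]
        have ht : Function.update g j.succ (shiftLetter 1 (g j.succ)) ∘ Fin.succ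
            = Function.update (g ∘ Fin.succ) j (shiftLetter 1 ((g ∘ Fin.succ) j)) := by
          funext m
          by_cases hm : m = j
          · subst hm; simp
          · simp only [Function.comp_apply, Function.update_of_ne hm,
              Function.update_of_ne (fun h => hm (Fin.succ_injective _ h))]
        rw [ht, Function.update_of_ne (Fin.succ_ne_zero j).symm]
      rw [h0]
      rfl

/-- Shift vector bump at position `j`. -/
def bump {n : ℕ} (c : Fin n → ℕ) (j : Fin n) : Fin n → ℕ :=
  fun m => c m + (if m = j then 1 else 0)

lemma d_single_shiftWord (d : MonoidAlgebra k (FreeMonoid (X × ℕ)) →ₗ[k] MonoidAlgebra k (FreeMonoid (X × ℕ)))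
    (hgen : ∀ a : X × ℕ,
      d (MonoidAlgebra.single (FreeMonoid.of a) 1)
        = MonoidAlgebra.single (FreeMonoid.of (shiftLetter 1 a)) 1)
    (h1 : d 1 = 0)
    (hleib : ∀ p q, d (p * q) = d p * q + p * d q)
    (n : ℕ) (W : Fin n → X × ℕ) (c : Fin n → ℕ) :
    d (MonoidAlgebra.single (shiftWord W c) 1)
      = ∑ j : Fin n, MonoidAlgebra.single (shiftWord W (bump c j)) 1 := by
  rw [shiftWord, d_single_ofFn d hgen h1 hleib]
  refine Finset.sum_congr rfl fun j _ => ?_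
  congr 2
  rw [List.ofFn_inj]
  funext m
  by_cases hm : m = j
  · subst hm
    simp [bump, shiftLetter, add_assoc]
  · simp [bump, hm, Function.update_of_ne hm]

/-- The distinguished shift vector `i·e₀`. -/
def e0 {n : ℕ} (i : ℕ) : Fin (n+1) → ℕ := fun j => if j = 0 then i else 0

lemma key (d : MonoidAlgebra k (FreeMonoid (X × ℕ)) →ₗ[k] MonoidAlgebra k (FreeMonoid (X × ℕ)))
    (hgen : ∀ a : X × ℕ,
      d (MonoidAlgebra.single (FreeMonoid.of a) 1)
        = MonoidAlgebra.single (FreeMonoid.of (shiftLetter 1 a)) 1)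
    (h1 : d 1 = 0)
    (hleib : ∀ p q, d (p * q) = d p * q + p * d q)
    (n : ℕ) (W : Fin (n+1) → X × ℕ) (i : ℕ) :
    ((⇑d)^[i] (MonoidAlgebra.single (FreeMonoid.ofList (List.ofFn W)) (1:k))).coeff
        (shiftWord W (e0 i)) = 1 ∧
    ∀ v, ((⇑d)^[i] (MonoidAlgebra.single (FreeMonoid.ofList (List.ofFn W)) (1:k))).coeff v ≠ 0 →
      ∃ c : Fin (n+1) → ℕ, (∑ j, c j) = i ∧ v = shiftWord W c := by
  induction i with
  | zero =>
    have hW : shiftWord W (e0 0) = FreeMonoid.ofList (List.ofFn W) := by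
      unfold shiftWord e0
      refine congrArg FreeMonoid.ofList ?_
      rw [List.ofFn_inj]
      funext j
      simp [shiftLetter]
    constructor
    · simp only [Function.iterate_zero, id_eq, hW]
      exact Finsupp.single_eq_same
    · intro v hv
      simp only [Function.iterate_zero, id_eq] at hv
      refine ⟨e0 0, by simp [e0], ?_⟩
      have hveq : v = FreeMonoid.ofList (List.ofFn W) := by
        by_contra hne
        exact hv (Finsupp.single_eq_of_ne' (Ne.symm hne))
      rw [hveq, ← hW]
  | succ i ih =>
    obtain ⟨ihc, ihs⟩ := ih
    set F := (⇑d)^[i] (MonoidAlgebra.single (FreeMonoid.ofList (List.ofFn W)) (1:k)) with hF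
    have hstep : (⇑d)^[i+1] (MonoidAlgebra.single (FreeMonoid.ofList (List.ofFn W)) (1:k)) = d F := by
      rw [Function.iterate_succ_apply']
    have hdF : ∀ v, (d F).coeff v = ∑ w ∈ F.coeff.support, F.coeff w * (d (MonoidAlgebra.single w 1)).coeff v := by
      intro v
      conv_lhs => rw [← MonoidAlgebra.sum_coeff_single F]
      rw [map_finsuppSum, Finsupp.sum, MonoidAlgebra.coeff_sum, Finsupp.finset_sum_apply]
      refine Finset.sum_congr rfl fun w hw => ?_
      have hsm : (MonoidAlgebra.single w (F.coeff w) : MonoidAlgebra k (FreeMonoid (X × ℕ)))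
          = F.coeff w • MonoidAlgebra.single w 1 := by
        rw [MonoidAlgebra.smul_single, smul_eq_mul, mul_one]
      rw [hsm, map_smul, MonoidAlgebra.coeff_smul_apply, smul_eq_mul]
    rw [hstep]
    constructor
    · rw [hdF]
      have hTmem : shiftWord W (e0 i) ∈ F.coeff.support :=
        Finsupp.mem_support_iff.2 (by rw [ihc]; exact one_ne_zero)
      rw [Finset.sum_eq_single_of_mem _ hTmem ?h0]
      case h0 =>
        intro w hw hne
        obtain ⟨c, hcsum, rfl⟩ := ihs w (Finsupp.mem_support_iff.1 hw)
        have hcne : c ≠ e0 i := fun h => hne (by rw [h])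
        rw [d_single_shiftWord d hgen h1 hleib, MonoidAlgebra.coeff_sum, Finsupp.finset_sum_apply]
        have hz : ∀ j : Fin (n+1),
            (MonoidAlgebra.single (shiftWord W (bump c j)) (1:k)).coeff (shiftWord W (e0 (i+1))) = 0 := by
          intro j
          refine Finsupp.single_eq_of_ne' ?_
          intro heq
          have hb : bump c j = e0 (i+1) := shiftWord_inj W heq
          by_cases hj : j = 0
          · subst hj
            apply hcne
            funext m
            have hm' := congrFun hb m
            by_cases hm : (m : Fin (n+1)) = 0
            · subst hm
              simp [bump, e0] at hm' ⊢
              omega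
            · simp [bump, e0, hm] at hm' ⊢
              omega
          · have hm' := congrFun hb j
            simp [bump, e0, hj] at hm'
        rw [Finset.sum_eq_zero fun j _ => hz j, mul_zero]
      · rw [ihc, one_mul, d_single_shiftWord d hgen h1 hleib, MonoidAlgebra.coeff_sum, Finsupp.finset_sum_apply]
        have heval : ∀ j : Fin (n+1),
            (MonoidAlgebra.single (shiftWord W (bump (e0 i) j)) (1:k)).coeff (shiftWord W (e0 (i+1)))
              = if j = 0 then 1 else 0 := by
          intro j
          by_cases hj : j = 0
          · subst hj
            have hb : bump (e0 (n := n) i) 0 = e0 (i+1) := by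
              funext m
              by_cases hm : (m : Fin (n+1)) = 0 <;> simp [bump, e0, hm]
            rw [hb, if_pos rfl]
            exact Finsupp.single_eq_same
          · rw [if_neg hj]
            refine Finsupp.single_eq_of_ne' ?_
            intro heq
            have hb := congrFun (shiftWord_inj W heq) j
            simp [bump, e0, hj] at hb
        rw [Finset.sum_congr rfl fun j _ => heval j]
        simp
    · intro v hv
      rw [hdF] at hv
      obtain ⟨w, hw, hwne⟩ := Finset.exists_ne_zero_of_sum_ne_zero hv
      obtain ⟨c, hcsum, rfl⟩ := ihs w (Finsupp.mem_support_iff.1 hw)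
      have hd : (d (MonoidAlgebra.single (shiftWord W c) 1)).coeff v ≠ 0 := by
        intro h; rw [h, mul_zero] at hwne; exact hwne rfl
      rw [d_single_shiftWord d hgen h1 hleib, MonoidAlgebra.coeff_sum, Finsupp.finset_sum_apply] at hd
      obtain ⟨j, _, hj⟩ := Finset.exists_ne_zero_of_sum_ne_zero hd
      have hveq : v = shiftWord W (bump c j) := by
        by_contra hne
        exact hj (Finsupp.single_eq_of_ne' fun h => hne h.symm)
      refine ⟨bump c j, ?_, hveq⟩
      unfold bump
      rw [Finset.sum_add_distrib, hcsum, Finset.sum_ite_eq' Finset.univ j (fun _ => 1)]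
      simp

end Aux

/-- In the free differential algebra of weight `0` on a well-ordered set `X`, the leading
monomial of `d^i(u₀u₁⋯uᵣ)` is `d^i(u₀)u₁⋯uᵣ`, with coefficient `1`. -/
theorem leading_term_zero_weight (k : Type*) [Field k] [CharZero k]
    (X : Type*) [LinearOrder X] (hwo : WellFoundedLT X)
    (d : MonoidAlgebra k (FreeMonoid (X × ℕ)) →ₗ[k] MonoidAlgebra k (FreeMonoid (X × ℕ)))
    (hgen : ∀ a : X × ℕ,
      d (MonoidAlgebra.single (FreeMonoid.of a) 1)
        = MonoidAlgebra.single (FreeMonoid.of (shiftLetter 1 a)) 1)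
    (h1 : d 1 = 0)
    (hleib : ∀ p q, d (p * q) = d p * q + p * d q)
    (r : ℕ) (u0 : X × ℕ) (u : Fin r → X × ℕ) (i : ℕ) :
    ((⇑d)^[i] (MonoidAlgebra.single (FreeMonoid.ofList (u0 :: List.ofFn u)) (1 : k))).coeff
        (FreeMonoid.ofList (shiftLetter i u0 :: List.ofFn u))
      = 1 ∧
    ∀ v : FreeMonoid (X × ℕ),
      v ≠ FreeMonoid.ofList (shiftLetter i u0 :: List.ofFn u) →
      ((⇑d)^[i] (MonoidAlgebra.single (FreeMonoid.ofList (u0 :: List.ofFn u)) (1 : k))).coeff v ≠ 0 →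
      wordLt (FreeMonoid.toList v) (shiftLetter i u0 :: List.ofFn u) := by
  set W : Fin (r+1) → X × ℕ := Fin.cons u0 u with hWdef
  have hofn : List.ofFn W = u0 :: List.ofFn u := by
    rw [ofFn_succ_eq]
    have ht : W ∘ Fin.succ = u := by
      funext j
      simp [hWdef]
    rw [ht]
    simp [hWdef]
  have htgt : shiftWord W (e0 i) = FreeMonoid.ofList (shiftLetter i u0 :: List.ofFn u) := by
    unfold shiftWord
    refine congrArg FreeMonoid.ofList ?_
    rw [ofFn_succ_eq]
    have ht : (fun j => shiftLetter (e0 i j) (W j)) ∘ Fin.succ = u := by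
      funext j
      simp [hWdef, e0, Fin.succ_ne_zero, shiftLetter]
    rw [ht]
    simp [hWdef, e0]
  obtain ⟨h1', h2'⟩ := key d hgen h1 hleib r W i
  rw [hofn] at h1' h2'
  rw [htgt] at h1'
  refine ⟨h1', ?_⟩
  intro v hvne hv
  obtain ⟨c, hcsum, rfl⟩ := h2' v hv
  have hc0le : c 0 ≤ i := by
    rw [← hcsum, Fin.sum_univ_succ]
    exact Nat.le_add_right _ _
  have hc0lt : c 0 < i := by
    rcases lt_or_eq_of_le hc0le with h | h
    · exact h
    · exfalso
      apply hvne
      have hz : ∀ j : Fin r, c j.succ = 0 := by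
        have hs : ∑ j : Fin r, c j.succ = 0 := by
          have := hcsum
          rw [Fin.sum_univ_succ, h] at this
          omega
        intro j
        exact Finset.sum_eq_zero_iff.1 hs j (Finset.mem_univ j)
      rw [← htgt]
      unfold shiftWord
      refine congrArg FreeMonoid.ofList ?_
      rw [List.ofFn_inj]
      funext m
      refine Fin.cases ?_ ?_ m
      · simp [e0, h]
      · intro p
        simp [e0, Fin.succ_ne_zero, hz p]
  right
  constructor
  · simp [shiftWord]
  · have htl : FreeMonoid.toList (shiftWord W c)
        = shiftLetter (c 0) u0 :: List.ofFn (fun j => shiftLetter (c j.succ) (u j)) := by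
      show (List.ofFn fun j => shiftLetter (c j) (W j)) = _
      rw [ofFn_succ_eq]
      have ht : (fun j => shiftLetter (c j) (W j)) ∘ Fin.succ
          = fun j => shiftLetter (c j.succ) (u j) := by
        funext j
        simp [hWdef]
      rw [ht]
      simp [hWdef]
    rw [htl]
    exact List.Lex.rel (Or.inl (by simp [shiftLetter]; omega))
end

section
/- For any finite commutative group G over a field k of characteristic 0, every weight-0 derivation d on kG is zero, and (kG, 0) satisfies the universal property of the free commutative differential algebra of weight 0 on the group algebra kG; that is, the free commutative differential algebra of weight 0 on kG is (kG, 0). -/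
universe w

private lemma deriv_pow_aux {k R : Type*} [Field k] [CommRing R] [Algebra k R]
    (dR : R →ₗ[k] R) (hL : ∀ x y : R, dR (x * y) = dR x * y + x * dR y)
    (x : R) : ∀ n : ℕ, dR (x ^ (n + 1)) = ((n : R) + 1) * (x ^ n * dR x) := by
  intro n
  induction n with
  | zero => simp
  | succ m ih =>
    rw [pow_succ, hL, ih]
    push_cast
    ring

private lemma deriv_key {k : Type*} [Field k] [CharZero k] {G : Type*} [CommGroup G]
    [Fintype G] {R : Type w} [CommRing R] [Algebra k R] (dR : R →ₗ[k] R)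
    (hL : ∀ x y : R, dR (x * y) = dR x * y + x * dR y) (h1 : dR 1 = 0)
    (φ : MonoidAlgebra k G →ₐ[k] R) (a : MonoidAlgebra k G) : dR (φ a) = 0 := by
  have hg : ∀ g : G, dR (φ (MonoidAlgebra.of k G g)) = 0 := by
    intro g
    set x := φ (MonoidAlgebra.of k G g) with hx
    have hinv : x * φ (MonoidAlgebra.of k G g⁻¹) = 1 := by
      rw [hx, ← map_mul, ← map_mul]
      rw [mul_inv_cancel, map_one, map_one]
    obtain ⟨m, hm⟩ : ∃ m : ℕ, Fintype.card G = m + 1 :=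
      ⟨Fintype.card G - 1, (Nat.succ_pred_eq_of_pos Fintype.card_pos).symm⟩
    have hxn : x ^ (m + 1) = 1 := by
      rw [hx, ← map_pow, ← map_pow, ← hm, pow_card_eq_one, map_one, map_one]
    have h0 : ((m : R) + 1) * (x ^ m * dR x) = 0 := by
      rw [← deriv_pow_aux dR hL x m, hxn, h1]
    have hcast : ((m : R) + 1) = algebraMap k R ((m : k) + 1) := by
      push_cast; ring
    have hm0 : x ^ m * dR x = 0 := by
      have hne : ((m : k) + 1) ≠ 0 := Nat.cast_add_one_ne_zero m
      have h2 := congrArg (fun y => algebraMap k R ((m : k) + 1)⁻¹ * y) h0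
      simp only [hcast, ← mul_assoc, ← map_mul, inv_mul_cancel₀ hne, map_one, one_mul,
        mul_zero] at h2
      exact h2
    have : (φ (MonoidAlgebra.of k G g⁻¹)) ^ m * (x ^ m * dR x) = dR x := by
      rw [← mul_assoc, ← mul_pow, mul_comm (φ (MonoidAlgebra.of k G g⁻¹)) x, hinv,
        one_pow, one_mul]
    rw [← this, hm0, mul_zero]
  induction a using MonoidAlgebra.induction_on with
  | of g => exact hg g
  | add f g hf hg' => rw [map_add, map_add, hf, hg', add_zero]
  | smul r f hf => rw [map_smul, map_smul, hf, smul_zero]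

/-- For a finite commutative group `G` over a field of characteristic 0, the free commutative
differential algebra of weight 0 on the group algebra `kG` is `(kG, 0)`: every weight-0
derivation on `kG` is zero, and for any commutative differential algebra `(R, d)` of weight 0,
any algebra homomorphism `φ : kG → R` automatically satisfies `d(φ(a)) = 0`, so `(kG, 0)`
satisfies the universal property. -/
theorem free_comm_diff_algebra_on_group_algebra (k : Type*) [Field k] [CharZero k]
    (G : Type*) [CommGroup G] [Fintype G] :
    (∀ d : MonoidAlgebra k G →ₗ[k] MonoidAlgebra k G,
      (∀ x y, d (x * y) = d x * y + x * d y) → d 1 = 0 → d = 0) ∧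
    (∀ (R : Type w) [CommRing R] [Algebra k R] (dR : R →ₗ[k] R),
      (∀ x y : R, dR (x * y) = dR x * y + x * dR y) → dR 1 = 0 →
      ∀ (φ : MonoidAlgebra k G →ₐ[k] R) (a : MonoidAlgebra k G), dR (φ a) = 0) := by
  constructor
  · intro d hL h1
    refine LinearMap.ext fun a => ?_
    simpa using deriv_key d hL h1 (AlgHom.id k (MonoidAlgebra k G)) a
  · intro R _ _ dR hL h1 φ a
    exact deriv_key dR hL h1 φ a
end

section
/- Let A = k[x,y]/(x+y+1). In the free differential algebra k⟨Δ({x,y})⟩ of weight λ, the differential ideal generated by x^(0) + y^(0) + 1 equals the two-sided ideal generated by { x^(m) + y^(m) + δ_{m,0} : m ≥ 0 }, and the quotient is isomorphic as a differential algebra to the free differential algebra k⟨ y^(k) : k ≥ 0 ⟩ on one generator. -/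
namespace FDAaux

variable (k : Type*) [Field k]

/-- The algebra map sending `x^(m) = ι(false,m)` to `-(ι m) - δ_{m,0}` and
`y^(m) = ι(true,m)` to `ι m`. -/
noncomputable def phi : FreeAlgebra k (Bool × ℕ) →ₐ[k] FreeAlgebra k ℕ :=
  FreeAlgebra.lift k fun p : Bool × ℕ =>
    if p.1 then FreeAlgebra.ι k p.2
    else -FreeAlgebra.ι k p.2 - (if p.2 = 0 then 1 else 0)

/-- The section sending `ι n` to `y^(n) = ι(true,n)`. -/
noncomputable def psi : FreeAlgebra k ℕ →ₐ[k] FreeAlgebra k (Bool × ℕ) :=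
  FreeAlgebra.lift k fun n : ℕ => FreeAlgebra.ι k ((true, n) : Bool × ℕ)

@[simp] lemma phi_true (n : ℕ) :
    phi k (FreeAlgebra.ι k ((true, n) : Bool × ℕ)) = FreeAlgebra.ι k n := by
  simp [phi, FreeAlgebra.lift_ι_apply]

@[simp] lemma phi_false (n : ℕ) :
    phi k (FreeAlgebra.ι k ((false, n) : Bool × ℕ)) =
      -FreeAlgebra.ι k n - (if n = 0 then 1 else 0) := by
  simp [phi, FreeAlgebra.lift_ι_apply]

@[simp] lemma psi_ι (n : ℕ) :
    psi k (FreeAlgebra.ι k n) = FreeAlgebra.ι k ((true, n) : Bool × ℕ) := by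
  simp [psi, FreeAlgebra.lift_ι_apply]

lemma phi_psi (x : FreeAlgebra k ℕ) : phi k (psi k x) = x := by
  induction x using FreeAlgebra.induction with
  | grade0 r => simp
  | grade1 n => simp
  | mul a b ha hb => simp [map_mul, ha, hb]
  | add a b ha hb => simp [map_add, ha, hb]

end FDAaux

/-- For `A = k[x,y]/(x+y+1)`: in the free differential algebra `k⟨Δ({x,y})⟩` of weight `λ`
(generators `x^(n) = ι(false, n)` and `y^(n) = ι(true, n)`), the differential ideal generated
by `x^(0) + y^(0) + 1` equals the two-sided ideal generated by
`{x^(m) + y^(m) + δ_{m,0} : m ≥ 0}`, and the quotient by it is isomorphic as a differential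
algebra to the free differential algebra on one generator (expressed via a surjective
algebra map to `k⟨y^(k) : k ≥ 0⟩` with the differential ideal as its kernel, commuting with
the derivations). -/
theorem free_diff_algebra_on_polynomial_relation (k : Type*) [Field k] [CharZero k] (lam : k)
    (d : FreeAlgebra k (Bool × ℕ) →ₗ[k] FreeAlgebra k (Bool × ℕ))
    (hgen : ∀ (b : Bool) (n : ℕ), d (FreeAlgebra.ι k (b, n)) = FreeAlgebra.ι k (b, n + 1))
    (h1 : d 1 = 0)
    (hleib : ∀ a b : FreeAlgebra k (Bool × ℕ),
      d (a * b) = d a * b + a * d b + lam • (d a * d b))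
    (e : FreeAlgebra k ℕ →ₗ[k] FreeAlgebra k ℕ)
    (egen : ∀ n : ℕ, e (FreeAlgebra.ι k n) = FreeAlgebra.ι k (n + 1))
    (e1 : e 1 = 0)
    (eleib : ∀ a b : FreeAlgebra k ℕ, e (a * b) = e a * b + a * e b + lam • (e a * e b)) :
    sInf {I : TwoSidedIdeal (FreeAlgebra k (Bool × ℕ)) |
        (FreeAlgebra.ι k ((false, 0) : Bool × ℕ) + FreeAlgebra.ι k ((true, 0) : Bool × ℕ) + 1) ∈ I ∧
        ∀ a ∈ I, d a ∈ I}
      = TwoSidedIdeal.span {a | ∃ m : ℕ,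
          a = FreeAlgebra.ι k ((false, m) : Bool × ℕ) + FreeAlgebra.ι k ((true, m) : Bool × ℕ)
              + (if m = 0 then 1 else 0)} ∧
    ∃ φ : FreeAlgebra k (Bool × ℕ) →ₐ[k] FreeAlgebra k ℕ,
      Function.Surjective φ ∧
      (∀ a, φ a = 0 ↔
        a ∈ sInf {I : TwoSidedIdeal (FreeAlgebra k (Bool × ℕ)) |
          (FreeAlgebra.ι k ((false, 0) : Bool × ℕ) + FreeAlgebra.ι k ((true, 0) : Bool × ℕ) + 1) ∈ I ∧
          ∀ a ∈ I, d a ∈ I}) ∧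
      (∀ a, φ (d a) = e (φ a)) := by
  classical
  set S : Set (FreeAlgebra k (Bool × ℕ)) := {a | ∃ m : ℕ,
      a = FreeAlgebra.ι k ((false, m) : Bool × ℕ) + FreeAlgebra.ι k ((true, m) : Bool × ℕ)
          + (if m = 0 then 1 else 0)} with hS
  set J : TwoSidedIdeal (FreeAlgebra k (Bool × ℕ)) := TwoSidedIdeal.span S with hJ
  have hSJ : S ⊆ (J : Set (FreeAlgebra k (Bool × ℕ))) := TwoSidedIdeal.subset_span
  -- derivative of generators
  have hdgen : ∀ m : ℕ,
      d (FreeAlgebra.ι k ((false, m) : Bool × ℕ) + FreeAlgebra.ι k ((true, m) : Bool × ℕ)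
          + (if m = 0 then 1 else 0))
        = FreeAlgebra.ι k ((false, m + 1) : Bool × ℕ)
          + FreeAlgebra.ι k ((true, m + 1) : Bool × ℕ) + (if m + 1 = 0 then 1 else 0) := by
    intro m
    by_cases hm : m = 0 <;> simp [hm, map_add, hgen, h1]
  have smulJ : ∀ (c : k) {x}, x ∈ J → c • x ∈ J := by
    intro c x hx
    rw [Algebra.smul_def]
    exact J.mul_mem_left _ _ hx
  have hdS : ∀ s ∈ S, d s ∈ J := by
    rintro s ⟨m, rfl⟩
    rw [hdgen m]
    exact hSJ ⟨m + 1, rfl⟩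
  -- J is closed under d
  have hdJ : ∀ a ∈ J, d a ∈ J := by
    intro a ha
    let K : TwoSidedIdeal (FreeAlgebra k (Bool × ℕ)) :=
      TwoSidedIdeal.mk' {a | a ∈ J ∧ d a ∈ J}
        ⟨J.zero_mem, by simpa using J.zero_mem⟩
        (fun hx hy => ⟨J.add_mem hx.1 hy.1, by
          rw [map_add]; exact J.add_mem hx.2 hy.2⟩)
        (fun hx => ⟨J.neg_mem hx.1, by rw [map_neg]; exact J.neg_mem hx.2⟩)
        (fun {x y} hy => ⟨J.mul_mem_left _ _ hy.1, by
          rw [hleib]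
          exact J.add_mem (J.add_mem (J.mul_mem_left _ _ hy.1) (J.mul_mem_left _ _ hy.2))
            (smulJ _ (J.mul_mem_left _ _ hy.2))⟩)
        (fun {x y} hx => ⟨J.mul_mem_right _ _ hx.1, by
          rw [hleib]
          exact J.add_mem (J.add_mem (J.mul_mem_right _ _ hx.2) (J.mul_mem_right _ _ hx.1))
            (smulJ _ (J.mul_mem_right _ _ hx.2))⟩)
    have hK : a ∈ K := by
      refine TwoSidedIdeal.mem_span_iff.mp ha K ?_
      intro s hs
      exact (TwoSidedIdeal.mem_mk' _ _ _ _ _ _ _).mpr ⟨hSJ hs, hdS s hs⟩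
    exact ((TwoSidedIdeal.mem_mk' _ _ _ _ _ _ _).mp hK).2
  have hmemJ : (FreeAlgebra.ι k ((false, 0) : Bool × ℕ)
      + FreeAlgebra.ι k ((true, 0) : Bool × ℕ) + 1) ∈ J := by
    have : (FreeAlgebra.ι k ((false, 0) : Bool × ℕ)
        + FreeAlgebra.ι k ((true, 0) : Bool × ℕ) + 1) ∈ S := ⟨0, by simp⟩
    exact hSJ this
  -- part 1
  have part1 : sInf {I : TwoSidedIdeal (FreeAlgebra k (Bool × ℕ)) |
      (FreeAlgebra.ι k ((false, 0) : Bool × ℕ) + FreeAlgebra.ι k ((true, 0) : Bool × ℕ) + 1) ∈ I ∧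
      ∀ a ∈ I, d a ∈ I} = J := by
    apply le_antisymm
    · exact sInf_le ⟨hmemJ, hdJ⟩
    · apply le_sInf
      rintro I ⟨hI0, hId⟩
      have key : ∀ m : ℕ, (FreeAlgebra.ι k ((false, m) : Bool × ℕ)
          + FreeAlgebra.ι k ((true, m) : Bool × ℕ) + (if m = 0 then 1 else 0)) ∈ I := by
        intro m
        induction m with
        | zero => simpa using hI0
        | succ n ih =>
          have := hId _ ih
          rwa [hdgen n] at this
      intro x hx
      refine TwoSidedIdeal.mem_span_iff.mp hx I ?_
      rintro s ⟨m, rfl⟩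
      exact key m
  refine ⟨part1, FDAaux.phi k, ?_, ?_, ?_⟩
  · -- surjective
    intro x
    exact ⟨FDAaux.psi k x, FDAaux.phi_psi k x⟩
  · -- kernel
    intro a
    rw [part1]
    constructor
    · intro h
      -- key: a - ψ (φ a) ∈ J
      have hkey : ∀ b : FreeAlgebra k (Bool × ℕ), b - FDAaux.psi k (FDAaux.phi k b) ∈ J := by
        intro b
        induction b using FreeAlgebra.induction with
        | grade0 r => simp only [AlgHom.commutes, sub_self]; exact J.zero_mem
        | grade1 p =>
          obtain ⟨bb, n⟩ := p
          cases bb with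
          | true => simp only [FDAaux.phi_true, FDAaux.psi_ι, sub_self]; exact J.zero_mem
          | false =>
            have heq : FreeAlgebra.ι k ((false, n) : Bool × ℕ)
                - FDAaux.psi k (FDAaux.phi k (FreeAlgebra.ι k ((false, n) : Bool × ℕ)))
                = FreeAlgebra.ι k ((false, n) : Bool × ℕ)
                  + FreeAlgebra.ι k ((true, n) : Bool × ℕ) + (if n = 0 then 1 else 0) := by
              by_cases hn : n = 0 <;>
                simp [hn, map_sub, map_neg] <;> abel
            rw [heq]
            exact hSJ ⟨n, rfl⟩
        | mul x y hx hy =>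
          have heq : x * y - FDAaux.psi k (FDAaux.phi k (x * y))
              = x * (y - FDAaux.psi k (FDAaux.phi k y))
                + (x - FDAaux.psi k (FDAaux.phi k x)) * FDAaux.psi k (FDAaux.phi k y) := by
            rw [map_mul, map_mul]
            noncomm_ring
          rw [heq]
          exact J.add_mem (J.mul_mem_left _ _ hy) (J.mul_mem_right _ _ hx)
        | add x y hx hy =>
          have heq : x + y - FDAaux.psi k (FDAaux.phi k (x + y))
              = (x - FDAaux.psi k (FDAaux.phi k x)) + (y - FDAaux.psi k (FDAaux.phi k y)) := by
            rw [map_add, map_add]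
            abel
          rw [heq]
          exact J.add_mem hx hy
      have := hkey a
      rwa [h, map_zero, sub_zero] at this
    · intro h
      -- J ⊆ ker φ
      have : a ∈ TwoSidedIdeal.ker (FDAaux.phi k) := by
        refine TwoSidedIdeal.mem_span_iff.mp h _ ?_
        rintro s ⟨m, rfl⟩
        rw [SetLike.mem_coe, TwoSidedIdeal.mem_ker]
        by_cases hm : m = 0 <;> simp [hm, map_add] <;> abel
      rwa [TwoSidedIdeal.mem_ker] at this
  · -- commutes with derivations
    intro a
    induction a using FreeAlgebra.induction with
    | grade0 r =>
      have hd0 : d (algebraMap k (FreeAlgebra k (Bool × ℕ)) r) = 0 := by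
        rw [Algebra.algebraMap_eq_smul_one, map_smul, h1, smul_zero]
      have he0 : e (algebraMap k (FreeAlgebra k ℕ) r) = 0 := by
        rw [Algebra.algebraMap_eq_smul_one, map_smul, e1, smul_zero]
      rw [hd0, map_zero, AlgHom.commutes, he0]
    | grade1 p =>
      obtain ⟨b, n⟩ := p
      cases b with
      | true => rw [hgen, FDAaux.phi_true, FDAaux.phi_true, egen]
      | false =>
        rw [hgen, FDAaux.phi_false, FDAaux.phi_false]
        simp [map_sub, map_neg, egen, e1, apply_ite e]
    | mul x y hx hy =>
      rw [hleib, map_add, map_add, map_mul, map_mul, map_mul, map_smul, map_mul, hx, hy,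
        eleib]
    | add x y hx hy =>
      rw [map_add, map_add, map_add, map_add, hx, hy]
end

section
/- In the polynomial ring k[x^(n) : n ∈ ℕ] with the weight-0 derivation d determined by d(x^(n)) = x^(n+1), the element (x^(1))^3 belongs to the differential ideal generated by (x^(0))^2; specifically, (x^(1))^3 = (1/2)( d^2((x^(0))^2) · x^(1) − d((x^(0))^2) · x^(2) ). -/
open MvPolynomial

lemma d1_aux (k : Type*) [Field k] [CharZero k]
    (d : Derivation k (MvPolynomial ℕ k) (MvPolynomial ℕ k))
    (hd : ∀ n : ℕ, d (X n) = X (n + 1)) :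
    d ((X 0 : MvPolynomial ℕ k) ^ 2) = 2 * X 0 * X 1 := by
  have : ((X 0 : MvPolynomial ℕ k) ^ 2) = X 0 * X 0 := by ring
  rw [this, d.leibniz, hd]
  simp only [smul_eq_mul]
  ring

lemma d2_aux (k : Type*) [Field k] [CharZero k]
    (d : Derivation k (MvPolynomial ℕ k) (MvPolynomial ℕ k))
    (hd : ∀ n : ℕ, d (X n) = X (n + 1)) :
    d (d ((X 0 : MvPolynomial ℕ k) ^ 2)) = 2 * X 0 * X 2 + 2 * X 1 ^ 2 := by
  rw [d1_aux k d hd]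
  have : (2 * X 0 * X 1 : MvPolynomial ℕ k) = (2 : MvPolynomial ℕ k) * (X 0 * X 1) := by ring
  rw [this, d.leibniz, d.leibniz, hd, hd]
  have h2 : d (2 : MvPolynomial ℕ k) = 0 := by
    have : (2 : MvPolynomial ℕ k) = ((2 : ℕ) : MvPolynomial ℕ k) := by norm_num
    rw [this, d.map_natCast]
  rw [h2]
  simp only [smul_eq_mul, smul_zero]
  ring

/-- In `k[x^(n) : n ∈ ℕ]` with the derivation `d(x^(n)) = x^(n+1)`, the element `(x^(1))^3`
lies in the differential ideal generated by `(x^(0))^2`; explicitly,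
`(x^(1))^3 = (1/2)(d^2((x^(0))^2)·x^(1) − d((x^(0))^2)·x^(2))`. -/
theorem cube_in_diff_ideal (k : Type*) [Field k] [CharZero k]
    (d : Derivation k (MvPolynomial ℕ k) (MvPolynomial ℕ k))
    (hd : ∀ n : ℕ, d (X n) = X (n + 1)) :
    (X 1 : MvPolynomial ℕ k) ^ 3 ∈
      sInf {J : Ideal (MvPolynomial ℕ k) | (X 0 : MvPolynomial ℕ k) ^ 2 ∈ J ∧
        ∀ p ∈ J, d p ∈ J} ∧
    (X 1 : MvPolynomial ℕ k) ^ 3 =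
      C (2⁻¹ : k) *
        ((⇑d)^[2] ((X 0 : MvPolynomial ℕ k) ^ 2) * X 1
          - (⇑d)^[1] ((X 0 : MvPolynomial ℕ k) ^ 2) * X 2) := by
  have key : (X 1 : MvPolynomial ℕ k) ^ 3 =
      C (2⁻¹ : k) * (d (d ((X 0 : MvPolynomial ℕ k) ^ 2)) * X 1
        - d ((X 0 : MvPolynomial ℕ k) ^ 2) * X 2) := by
    rw [d2_aux k d hd, d1_aux k d hd]
    have h2 : (C (2⁻¹ : k) : MvPolynomial ℕ k) * 2 = 1 := by
      have : (2 : MvPolynomial ℕ k) = C (2 : k) := by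
        simp [map_ofNat]
      rw [this, ← C_mul]
      norm_num
    rw [show ((2 * X 0 * X 2 + 2 * X 1 ^ 2) * X 1 - 2 * X 0 * X 1 * X 2 :
        MvPolynomial ℕ k) = 2 * X 1 ^ 3 from by ring, ← mul_assoc, h2, one_mul]
  constructor
  · rw [Ideal.mem_sInf]
    intro J hJ
    obtain ⟨h0, hder⟩ := hJ
    have h1 : d ((X 0 : MvPolynomial ℕ k) ^ 2) ∈ J := hder _ h0
    have h2 : d (d ((X 0 : MvPolynomial ℕ k) ^ 2)) ∈ J := hder _ h1
    rw [key]
    exact Ideal.mul_mem_left _ _ (Ideal.sub_mem _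
      (Ideal.mul_mem_right _ _ h2) (Ideal.mul_mem_right _ _ h1))
  · simpa [Function.iterate_succ, Function.iterate_one] using key
end

section
/- Let (D, d) be a differential algebra of weight λ and x_1, x_2, x_3 ∈ D. Then d^n(x_1 x_2 x_3) = ∑ over (j_1,k_1,ℓ_1,j_2,k_2,ℓ_2) with n = j_1+k_1+ℓ_1 and j_1+k_1 = j_2+k_2+ℓ_2 of C(n; j_1,k_1,ℓ_1) C(j_1+k_1; j_2,k_2,ℓ_2) λ^{j_1+j_2} d^{n-k_1}(x_1) d^{j_1+k_1-k_2}(x_2) d^{j_2+k_2}(x_3), where C(m; a,b,c) denotes the multinomial coefficient m!/(a! b! c!). -/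
open Finset

private lemma hl_c_zero {n j i : ℕ} (h : n < j + i) :
    n.choose j * (n - j).choose i = 0 := by
  rcases le_or_gt j n with hj | hj
  · rw [Nat.choose_eq_zero_of_lt (show n - j < i by omega), mul_zero]
  · rw [Nat.choose_eq_zero_of_lt hj, zero_mul]

private lemma hl_coef_pascal (n j i : ℕ) :
    (n + 1).choose j * (n + 1 - j).choose i =
      n.choose j * (n - j).choose i
      + (if i = 0 then 0 else n.choose j * (n - j).choose (i - 1))
      + (if j = 0 then 0 else n.choose (j - 1) * (n - (j - 1)).choose i) := by
  cases j with
  | zero =>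
    cases i with
    | zero => simp
    | succ i' => simp [Nat.choose_succ_succ]; omega
  | succ j' =>
    have h1 : n + 1 - (j' + 1) = n - j' := by omega
    rw [h1, Nat.choose_succ_succ]
    simp only [if_neg (Nat.succ_ne_zero j'), Nat.succ_sub_one]
    cases i with
    | zero => simp; ring
    | succ i' =>
      simp only [if_neg (Nat.succ_ne_zero i'), Nat.succ_sub_one]
      rcases le_or_gt n j' with h | h
      · have hz : n.choose (j' + 1) = 0 := Nat.choose_eq_zero_of_lt (by omega)
        simp [hz, show n - j' = 0 from by omega]
      · have h2 : n - j' = (n - (j' + 1)) + 1 := by omega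
        rw [h2, Nat.choose_succ_succ]
        ring

private lemma hl_extend {D : Type*} [AddCommMonoid D] (m M : ℕ) (hM : m + 1 ≤ M)
    (f : ℕ → ℕ → D) :
    (∑ j ∈ range (m + 1), ∑ i ∈ range (m - j + 1),
        (m.choose j * (m - j).choose i) • f j i)
      = ∑ j ∈ range M, ∑ i ∈ range M,
        (m.choose j * (m - j).choose i) • f j i := by
  symm
  rw [← Finset.sum_subset (Finset.range_subset_range.mpr hM)]
  · apply Finset.sum_congr rfl
    intro j hj
    symm
    apply Finset.sum_subset
    · apply Finset.range_subset_range.mpr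
      simp only [mem_range] at hj
      omega
    · intro i _ hi
      simp only [mem_range, not_lt] at hi
      rw [hl_c_zero (show m < j + i by omega), zero_smul]
  · intro j _ hj
    simp only [mem_range, not_lt] at hj
    apply Finset.sum_eq_zero
    intro i _
    rw [hl_c_zero (show m < j + i by omega), zero_smul]

private lemma hl_two_factor (k : Type*) [Field k] [CharZero k]
    (D : Type*) [Ring D] [Algebra k D] (lam : k) (d : D →ₗ[k] D)
    (hd : ∀ x y : D, d (x * y) = d x * y + x * d y + lam • (d x * d y))
    (x y : D) (n : ℕ) :
    (⇑d)^[n] (x * y) =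
      ∑ j ∈ range (n + 1), ∑ i ∈ range (n - j + 1),
        (n.choose j * (n - j).choose i) •
          lam ^ j • ((⇑d)^[n - i] x * (⇑d)^[j + i] y) := by
  induction n with
  | zero => simp
  | succ n ih =>
    rw [Function.iterate_succ_apply', ih,
        hl_extend n (n + 2) (by omega), map_sum]
    simp only [map_sum, map_nsmul, map_smul, hd, ← Function.iterate_succ_apply']
    rw [hl_extend (n + 1) (n + 2) (by omega)]
    simp only [smul_add, Finset.sum_add_distrib]
    have hRHS : ∀ j i : ℕ,
        ((n + 1).choose j * (n + 1 - j).choose i) • lam ^ j •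
            ((⇑d)^[n + 1 - i] x * (⇑d)^[j + i] y)
          = (n.choose j * (n - j).choose i) • lam ^ j •
              ((⇑d)^[n + 1 - i] x * (⇑d)^[j + i] y)
            + (if i = 0 then 0 else n.choose j * (n - j).choose (i - 1)) • lam ^ j •
              ((⇑d)^[n + 1 - i] x * (⇑d)^[j + i] y)
            + (if j = 0 then 0 else n.choose (j - 1) * (n - (j - 1)).choose i) • lam ^ j •
              ((⇑d)^[n + 1 - i] x * (⇑d)^[j + i] y) := by
      intro j i
      rw [hl_coef_pascal, add_smul, add_smul]
    simp only [hRHS, Finset.sum_add_distrib]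
    congr 1
    · congr 1
      · -- A part
        apply Finset.sum_congr rfl; intro j _
        apply Finset.sum_congr rfl; intro i _
        rcases le_or_gt i n with h | h
        · rw [show (n - i).succ = n + 1 - i by omega]
        · rw [hl_c_zero (show n < j + i by omega), zero_smul, zero_smul]
      · -- B part
        apply Finset.sum_congr rfl; intro j _
        conv_lhs => rw [Finset.sum_range_succ]
        rw [hl_c_zero (show n < j + (n + 1) by omega), zero_smul, add_zero]
        conv_rhs => rw [Finset.sum_range_succ']
        simp only [Nat.succ_sub_succ_eq_sub, Nat.add_sub_cancel, Nat.succ_ne_zero,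
          if_false, zero_smul]
        rw [if_pos trivial, zero_smul, add_zero]
        exact Finset.sum_congr rfl fun i _ => rfl
    · -- C part
      rw [Finset.sum_comm]
      conv_rhs => rw [Finset.sum_comm]
      apply Finset.sum_congr rfl; intro i _
      conv_lhs => rw [Finset.sum_range_succ]
      rw [hl_c_zero (show n < n + 1 + i by omega), zero_smul, add_zero]
      conv_rhs => rw [Finset.sum_range_succ']
      simp only [Nat.succ_ne_zero, if_false, Nat.add_sub_cancel]
      rw [if_pos trivial, zero_smul, add_zero]
      apply Finset.sum_congr rfl; intro j _
      rcases le_or_gt i n with h | h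
      · rw [show (n - i).succ = n + 1 - i by omega, smul_smul, ← pow_succ,
          show (j + i).succ = j + 1 + i by omega]
      · rw [hl_c_zero (show n < j + i by omega), zero_smul, zero_smul]

/-- Three-factor higher Leibniz formula in a differential algebra of weight `λ`. -/
theorem higher_leibniz_three_factors (k : Type*) [Field k] [CharZero k]
    (D : Type*) [Ring D] [Algebra k D] (lam : k)
    (d : D →ₗ[k] D)
    (hd : ∀ x y : D, d (x * y) = d x * y + x * d y + lam • (d x * d y))
    (x₁ x₂ x₃ : D) (n : ℕ) :
    (⇑d)^[n] (x₁ * x₂ * x₃) =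
      ∑ j₁ ∈ Finset.range (n + 1), ∑ k₁ ∈ Finset.range (n - j₁ + 1),
        ∑ j₂ ∈ Finset.range (j₁ + k₁ + 1), ∑ k₂ ∈ Finset.range (j₁ + k₁ - j₂ + 1),
          (n.choose j₁ * (n - j₁).choose k₁ *
            ((j₁ + k₁).choose j₂ * (j₁ + k₁ - j₂).choose k₂) : ℕ) •
            lam ^ (j₁ + j₂) •
              ((⇑d)^[n - k₁] x₁ * (⇑d)^[j₁ + k₁ - k₂] x₂ * (⇑d)^[j₂ + k₂] x₃) := by
  rw [mul_assoc, hl_two_factor k D lam d hd x₁ (x₂ * x₃) n]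
  apply Finset.sum_congr rfl; intro j₁ _
  apply Finset.sum_congr rfl; intro k₁ _
  rw [hl_two_factor k D lam d hd x₂ x₃ (j₁ + k₁)]
  simp only [Finset.mul_sum, Finset.smul_sum]
  apply Finset.sum_congr rfl; intro j₂ _
  apply Finset.sum_congr rfl; intro k₂ _
  rw [mul_smul_comm, mul_smul_comm, smul_comm (lam ^ j₁), smul_smul, smul_smul,
    ← pow_add, ← mul_assoc ((⇑d)^[n - k₁] x₁)]
end
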